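/- arXiv:2212.05362 — 6 statements merged into one kernel-verified Lean document; each statement's English description precedes it below -/
import Mathlib

section
/- The total number of Stembridge codes of length n equals n! for all n ≥ 1. -/
open Finset

/-- number of occurrences of `k` in `α` -/
def occ {n : ℕ} (α : Fin n → ℕ) (k : ℕ) : ℕ :=
  (Finset.univ.filter fun i => α i = k).card

/-- maximum entry of `α` -/
def maxVal {n : ℕ} (α : Fin n → ℕ) : ℕ :=
  Finset.univ.sup α

/-- `(α, f)` is a Stembridge code -/
def IsCode {n : ℕ} (α : Fin n → ℕ) (f : ℕ → ℕ) : Prop :=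
  (∀ k, 1 ≤ k → k ≤ maxVal α → 2 ≤ occ α k) ∧
  (∀ k, 1 ≤ k → k ≤ maxVal α → 1 ≤ f k ∧ f k ≤ occ α k - 1) ∧
  (∀ k, k = 0 ∨ maxVal α < k → f k = 0)

/-- the index of a Stembridge code -/
def codeIndex {n : ℕ} (α : Fin n → ℕ) (f : ℕ → ℕ) : ℕ :=
  ∑ k ∈ Finset.Icc 1 (maxVal α), f k

/-- Stembridge codes of length `n` -/
def StembridgeCode (n : ℕ) :=
  {p : (Fin n → ℕ) × (ℕ → ℕ) // IsCode p.1 p.2}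

namespace SAux

variable {n : ℕ}

lemma le_maxVal {α : Fin n → ℕ} (i : Fin n) : α i ≤ maxVal α :=
  Finset.le_sup (mem_univ i)

lemma maxVal_le {α : Fin n → ℕ} {m : ℕ} (h : ∀ i, α i ≤ m) : maxVal α ≤ m :=
  Finset.sup_le fun i _ => h i

lemma maxVal_const_zero : maxVal (fun _ : Fin n => 0) = 0 :=
  Nat.eq_zero_of_le_zero (maxVal_le fun _ => le_rfl)

/-- the order iso from `Fin (n - #B)` onto the complement of `B` -/
def emb (B : Finset (Fin n)) : Fin (n - #B) ≃o {x // x ∈ Bᶜ} :=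
  Bᶜ.orderIsoOfFin (by rw [card_compl, Fintype.card_fin])

lemma occ_emb (B : Finset (Fin n)) (α : Fin n → ℕ) (k : ℕ)
    (h : ∀ i, α i = k → i ∈ Bᶜ) :
    occ (fun j => α ((emb B j : Fin n))) k = occ α k := by
  unfold occ
  refine Finset.card_bij' (fun j _ => (emb B j : Fin n))
    (fun i hi => (emb B).symm ⟨i, h i (by simpa using hi)⟩) ?_ ?_ ?_ ?_
  · intro a ha
    simp only [mem_filter, mem_univ, true_and] at ha ⊢
    exact ha
  · intro i hi
    simp only [mem_filter, mem_univ, true_and] at hi ⊢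
    rw [show ((emb B) ((emb B).symm ⟨i, h i hi⟩) : Fin n) = i by
      rw [OrderIso.apply_symm_apply]]
    exact hi
  · intro a _
    simp
  · intro i hi
    simp

/-- the block of positions where `α` attains its maximum -/
def Blk (α : Fin n → ℕ) : Finset (Fin n) := univ.filter fun i => α i = maxVal α

lemma occ_maxVal (α : Fin n → ℕ) : occ α (maxVal α) = #(Blk α) := rfl

/-- restriction of `α` to the complement of the maximal block -/
def downα (α : Fin n → ℕ) : Fin (n - #(Blk α)) → ℕ := fun j => α (emb (Blk α) j)

/-- extension of `α'` by a new maximal block `B` -/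
def upα (B : Finset (Fin n)) (α' : Fin (n - #B) → ℕ) : Fin n → ℕ :=
  fun i => if h : i ∈ Bᶜ then α' ((emb B).symm ⟨i, h⟩) else maxVal α' + 1

lemma upα_emb (B : Finset (Fin n)) (α' : Fin (n - #B) → ℕ) (j : Fin (n - #B)) :
    upα B α' (emb B j) = α' j := by
  have h : ((emb B j : Fin n)) ∈ Bᶜ := (emb B j).2
  rw [upα, dif_pos h]
  congr 1
  rw [show (⟨(emb B j : Fin n), h⟩ : {x // x ∈ Bᶜ}) = emb B j from Subtype.ext rfl,
    OrderIso.symm_apply_apply]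

lemma upα_mem (B : Finset (Fin n)) (α' : Fin (n - #B) → ℕ) {i : Fin n} (hi : i ∈ B) :
    upα B α' i = maxVal α' + 1 := by
  rw [upα, dif_neg (by simpa using hi)]

lemma filter_up (B : Finset (Fin n)) (α' : Fin (n - #B) → ℕ) :
    univ.filter (fun i => upα B α' i = maxVal α' + 1) = B := by
  ext i
  simp only [mem_filter, mem_univ, true_and]
  by_cases h : i ∈ B
  · simp [upα_mem B α' h, h]
  · have h' : i ∈ Bᶜ := mem_compl.2 h
    rw [upα, dif_pos h']
    have := le_maxVal (α := α') ((emb B).symm ⟨i, h'⟩)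
    constructor
    · intro hk; omega
    · intro hb; exact absurd hb h

lemma occ_up_max (B : Finset (Fin n)) (α' : Fin (n - #B) → ℕ) :
    occ (upα B α') (maxVal α' + 1) = #B := by
  rw [occ, filter_up]

lemma occ_up (B : Finset (Fin n)) (α' : Fin (n - #B) → ℕ) {k : ℕ}
    (hk : k ≠ maxVal α' + 1) : occ (upα B α') k = occ α' k := by
  have h : ∀ i, upα B α' i = k → i ∈ Bᶜ := by
    intro i hi
    by_contra hmem
    rw [mem_compl, not_not] at hmem
    rw [upα_mem B α' hmem] at hi
    exact hk hi.symm
  have h2 := occ_emb B (upα B α') k h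
  rw [← h2]
  congr 1
  funext j
  rw [upα_emb]

lemma maxVal_up (B : Finset (Fin n)) (hB : B.Nonempty) (α' : Fin (n - #B) → ℕ) :
    maxVal (upα B α') = maxVal α' + 1 := by
  apply le_antisymm
  · apply maxVal_le
    intro i
    by_cases h : i ∈ B
    · rw [upα_mem B α' h]
    · rw [upα, dif_pos (mem_compl.2 h)]
      exact le_trans (le_maxVal _) (Nat.le_succ _)
  · obtain ⟨i, hi⟩ := hB
    rw [← upα_mem B α' hi]
    exact le_maxVal i

lemma occ_down (α : Fin n → ℕ) {k : ℕ} (hk : k ≠ maxVal α) :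
    occ (downα α) k = occ α k := by
  apply occ_emb
  intro i hi
  simp only [Blk, mem_compl, mem_filter, mem_univ, true_and]
  rw [hi]; exact hk

lemma maxVal_down {α : Fin n → ℕ} (hc1 : ∀ k, 1 ≤ k → k ≤ maxVal α → 2 ≤ occ α k)
    (hm : 1 ≤ maxVal α) : maxVal (downα α) + 1 = maxVal α := by
  set m := maxVal α with hmdef
  have hub : maxVal (downα α) ≤ m - 1 := by
    apply maxVal_le
    intro j
    have h1 : downα α j ≤ m := le_maxVal (α := α) _
    have h2 : downα α j ≠ m := by
      have := (emb (Blk α) j).2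
      simp only [Blk, mem_compl, mem_filter, mem_univ, true_and] at this
      exact this
    omega
  rcases Nat.lt_or_ge m 2 with h2 | h2
  · omega
  · have hocc : 0 < occ α (m - 1) := lt_of_lt_of_le (by norm_num) (hc1 (m-1) (by omega) (by omega))
    rw [occ] at hocc
    obtain ⟨i, hi⟩ := Finset.card_pos.1 hocc
    simp only [mem_filter, mem_univ, true_and] at hi
    have hic : i ∈ (Blk α)ᶜ := by
      simp only [Blk, mem_compl, mem_filter, mem_univ, true_and]
      omega
    have : downα α ((emb (Blk α)).symm ⟨i, hic⟩) = m - 1 := by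
      rw [downα, show ((emb (Blk α)) ((emb (Blk α)).symm ⟨i, hic⟩) : Fin n) = i by
        rw [OrderIso.apply_symm_apply]]
      exact hi
    have hlb : m - 1 ≤ maxVal (downα α) := this ▸ le_maxVal _
    omega

lemma isCode_down {α : Fin n → ℕ} {f : ℕ → ℕ} (hc : IsCode α f) (hm : 1 ≤ maxVal α) :
    IsCode (downα α) (Function.update f (maxVal α) 0) := by
  obtain ⟨hc1, hc2, hc3⟩ := hc
  have hd := maxVal_down hc1 hm
  refine ⟨?_, ?_, ?_⟩
  · intro k h1 h2
    have hkm : k ≠ maxVal α := by omega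
    rw [occ_down α hkm]
    exact hc1 k h1 (by omega)
  · intro k h1 h2
    have hkm : k ≠ maxVal α := by omega
    rw [occ_down α hkm, Function.update_of_ne hkm]
    exact hc2 k h1 (by omega)
  · intro k hk
    rcases hk with hk | hk
    · subst hk
      rw [Function.update_of_ne (by omega)]
      exact hc3 0 (Or.inl rfl)
    · by_cases hkm : k = maxVal α
      · subst hkm; rw [Function.update_self]
      · rw [Function.update_of_ne hkm]
        exact hc3 k (Or.inr (by omega))

lemma isCode_up (B : Finset (Fin n)) (hB : 2 ≤ #B) {α' : Fin (n - #B) → ℕ} {f' : ℕ → ℕ}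
    (hc : IsCode α' f') (v : ℕ) (hv1 : 1 ≤ v) (hv2 : v ≤ #B - 1) :
    IsCode (upα B α') (Function.update f' (maxVal α' + 1) v) := by
  obtain ⟨hc1, hc2, hc3⟩ := hc
  have hmax : maxVal (upα B α') = maxVal α' + 1 :=
    maxVal_up B (Finset.card_pos.1 (by omega)) α'
  refine ⟨?_, ?_, ?_⟩
  · intro k h1 h2
    by_cases hk : k = maxVal α' + 1
    · subst hk; rw [occ_up_max]; exact hB
    · rw [occ_up B α' hk]
      exact hc1 k h1 (by omega)
  · intro k h1 h2
    by_cases hk : k = maxVal α' + 1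
    · subst hk
      rw [occ_up_max, Function.update_self]
      exact ⟨hv1, hv2⟩
    · rw [occ_up B α' hk, Function.update_of_ne hk]
      exact hc2 k h1 (by omega)
  · intro k hk
    rcases hk with hk | hk
    · subst hk
      rw [Function.update_of_ne (by omega)]
      exact hc3 0 (Or.inl rfl)
    · rw [hmax] at hk
      rw [Function.update_of_ne (by omega)]
      exact hc3 k (Or.inr (by omega))

/-- the trivial code -/
def trivialCode (n : ℕ) : StembridgeCode n :=
  ⟨(fun _ => 0, fun _ => 0), by
    refine ⟨?_, ?_, ?_⟩
    · intro k h1 h2; rw [maxVal_const_zero] at h2; omega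
    · intro k h1 h2; rw [maxVal_const_zero] at h2; omega
    · intro _ _; rfl⟩

/-- the inverse of the decomposition map -/
def bwd : Option (Σ B : Finset (Fin n), Fin (#B - 1) × StembridgeCode (n - #B)) →
    StembridgeCode n
  | none => trivialCode n
  | some ⟨B, t, c⟩ =>
    ⟨(upα B c.1.1, Function.update c.1.2 (maxVal c.1.1 + 1) (t.1 + 1)),
      isCode_up B (by have := t.2; omega) c.2 (t.1 + 1) (by omega) (by have := t.2; omega)⟩

lemma bwd_injective : Function.Injective (bwd (n := n)) := by
  intro x y hxy
  match x, y with
  | none, none => rfl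
  | none, some ⟨B, t, c⟩ =>
    exfalso
    have h := congrArg (fun z => maxVal z.1.1) hxy
    simp only [bwd, trivialCode] at h
    rw [maxVal_const_zero, maxVal_up B (Finset.card_pos.1 (by have := t.2; omega))] at h
    omega
  | some ⟨B, t, c⟩, none =>
    exfalso
    have h := congrArg (fun z => maxVal z.1.1) hxy
    simp only [bwd, trivialCode] at h
    rw [maxVal_const_zero, maxVal_up B (Finset.card_pos.1 (by have := t.2; omega))] at h
    omega
  | some ⟨B, t, c⟩, some ⟨B', t', c'⟩ =>
    obtain ⟨⟨α, f⟩, hc⟩ := c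
    obtain ⟨⟨α', f'⟩, hc'⟩ := c'
    dsimp only at hc hc'
    have hα : upα B α = upα B' α' := congrArg (fun z => z.1.1) hxy
    have hf : Function.update f (maxVal α + 1) (t.1 + 1)
        = Function.update f' (maxVal α' + 1) (t'.1 + 1) := congrArg (fun z => z.1.2) hxy
    have hBne : B.Nonempty := Finset.card_pos.1 (by have := t.2; omega)
    have hBne' : B'.Nonempty := Finset.card_pos.1 (by have := t'.2; omega)
    have hm : maxVal α = maxVal α' := by
      have h := congrArg maxVal hα
      rw [maxVal_up B hBne, maxVal_up B' hBne'] at h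
      omega
    have hBB : B = B' := by
      rw [← filter_up B α, ← filter_up B' α']
      rw [hα, hm]
    subst hBB
    have htt : t = t' := by
      have h := congrFun hf (maxVal α + 1)
      rw [Function.update_self, hm, Function.update_self] at h
      exact Fin.ext (by omega)
    have hαα : α = α' := by
      funext j
      have h := congrFun hα (emb B j)
      rwa [upα_emb, upα_emb] at h
    subst hαα
    have hff : f = f' := by
      funext k
      by_cases hk : k = maxVal α + 1
      · subst hk
        rw [hc.2.2 _ (Or.inr (by omega)), hc'.2.2 _ (Or.inr (by omega))]
      · have h := congrFun hf k
        rwa [Function.update_of_ne hk, hm, Function.update_of_ne (hm ▸ hk)] at h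
    subst hff
    rw [htt]

lemma bwd_surjective : Function.Surjective (bwd (n := n)) := by
  rintro ⟨⟨α, f⟩, hc⟩
  dsimp only at hc
  by_cases hm : maxVal α = 0
  · refine ⟨none, ?_⟩
    simp only [bwd, trivialCode]
    refine Subtype.ext (Prod.ext ?_ ?_)
    · funext i
      have := le_maxVal (α := α) i
      simp only
      omega
    · funext k
      exact (hc.2.2 k (by omega)).symm
  · have hm1 : 1 ≤ maxVal α := by omega
    have hocc : occ α (maxVal α) = #(Blk α) := occ_maxVal α
    have h2B : 2 ≤ #(Blk α) := by rw [← hocc]; exact hc.1 _ hm1 le_rfl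
    have hfm := hc.2.1 _ hm1 le_rfl
    have hd := maxVal_down hc.1 hm1
    refine ⟨some ⟨Blk α, ⟨f (maxVal α) - 1, by omega⟩,
      ⟨(downα α, Function.update f (maxVal α) 0), isCode_down hc hm1⟩⟩, ?_⟩
    simp only [bwd]
    refine Subtype.ext (Prod.ext ?_ ?_)
    · funext i
      simp only
      by_cases hi : i ∈ Blk α
      · rw [upα_mem _ _ hi, hd]
        have := (Finset.mem_filter.1 hi).2
        omega
      · have hi' : i ∈ (Blk α)ᶜ := mem_compl.2 hi
        rw [upα, dif_pos hi', downα,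
          show ((emb (Blk α)) ((emb (Blk α)).symm ⟨i, hi'⟩) : Fin n) = i by
            rw [OrderIso.apply_symm_apply]]
    · simp only [hd, Function.update_idem]
      rw [show f (maxVal α) - 1 + 1 = f (maxVal α) by omega]
      exact Function.update_eq_self _ _

lemma tele (n : ℕ) : ∀ k, k ≤ n →
    (∑ j ∈ range (k+1), n.choose j * ((j-1) * (n-j).factorial)) + n.choose k * (n-k).factorial = n.factorial := by
  intro k
  induction k with
  | zero => simp
  | succ k ih =>
    intro hk
    have ihh := ih (by omega)
    rw [Finset.sum_range_succ]
    have key : n.choose (k+1) * ((k+1-1) * (n-(k+1)).factorial) + n.choose (k+1) * (n-(k+1)).factorial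
        = n.choose k * (n-k).factorial := by
      have h1 := Nat.choose_succ_right_eq n k
      have h3 : (n - k).factorial = (n - k) * (n - (k+1)).factorial := by
        rw [show n - k = (n - (k+1)) + 1 by omega, Nat.factorial_succ]
      have h4 : n.choose (k+1) * ((k+1-1) * (n-(k+1)).factorial) + n.choose (k+1) * (n-(k+1)).factorial
          = (n.choose (k+1) * (k+1)) * (n-(k+1)).factorial := by
        rw [show k+1-1 = k from rfl]; ring
      rw [h4, h1, h3]; ring
    rw [add_assoc, key, ihh]

lemma keyIdentity (n : ℕ) :
    (∑ B : Finset (Fin n), (#B - 1) * (n - #B).factorial) + 1 = n.factorial := by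
  have ht := tele n n le_rfl
  rw [Nat.choose_self, Nat.sub_self, Nat.factorial_zero, mul_one] at ht
  rw [← ht]
  congr 1
  rw [← powerset_univ, Finset.sum_powerset]
  have hcu : #(univ : Finset (Fin n)) = n := by rw [card_univ, Fintype.card_fin]
  rw [hcu]
  apply Finset.sum_congr rfl
  intro j hj
  have : ∀ B ∈ powersetCard j (univ : Finset (Fin n)), (#B - 1) * (n - #B).factorial = (j-1) * (n-j).factorial := by
    intro B hB
    rw [(Finset.mem_powersetCard.1 hB).2]
  rw [Finset.sum_congr rfl this, Finset.sum_const, Finset.card_powersetCard, hcu, smul_eq_mul]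

lemma main : ∀ n : ℕ, Finite (StembridgeCode n) ∧ Nat.card (StembridgeCode n) = n.factorial := by
  intro n
  induction n using Nat.strong_induction_on with
  | _ n ih =>
    haveI hfib : ∀ B : Finset (Fin n), Finite (Fin (#B - 1) × StembridgeCode (n - #B)) := by
      intro B
      rcases le_or_gt 2 (#B) with h | h
      · have hlt : n - #B < n := by
          have := B.card_le_univ
          rw [Fintype.card_fin] at this
          omega
        haveI := (ih _ hlt).1
        infer_instance
      · haveI : IsEmpty (Fin (#B - 1)) := by
          rw [show #B - 1 = 0 by omega]; infer_instance
        infer_instance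
    have hcard : ∀ B : Finset (Fin n),
        Nat.card (Fin (#B-1) × StembridgeCode (n-#B)) = (#B - 1) * (n - #B).factorial := by
      intro B
      rw [Nat.card_prod, Nat.card_eq_fintype_card (α := Fin (#B-1)), Fintype.card_fin]
      rcases le_or_gt 2 (#B) with h | h
      · have hlt : n - #B < n := by
          have := B.card_le_univ
          rw [Fintype.card_fin] at this
          omega
        rw [(ih _ hlt).2]
      · rw [show #B - 1 = 0 by omega, Nat.zero_mul, Nat.zero_mul]
    letI : ∀ B : Finset (Fin n), Fintype (Fin (#B - 1) × StembridgeCode (n - #B)) :=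
      fun B => Fintype.ofFinite _
    constructor
    · exact Finite.of_surjective _ (bwd_surjective (n := n))
    · rw [← Nat.card_eq_of_bijective _ ⟨bwd_injective, bwd_surjective⟩]
      rw [Nat.card_eq_fintype_card, Fintype.card_option, Fintype.card_sigma]
      rw [← keyIdentity n]
      congr 1
      apply Finset.sum_congr rfl
      intro B _
      rw [← hcard B, Nat.card_eq_fintype_card]

end SAux

theorem stmt1 (n : ℕ) (hn : 1 ≤ n) : Nat.card (StembridgeCode n) = Nat.factorial n := by
  exact (SAux.main n).2
end

section
/- There is a bijection between the set FY(B_n) of monomial data {(F_1 ⊊ F_2 ⊊ ... ⊊ F_k ⊆ [n], (a_1,...,a_k)) : F_0 = ∅, 1 ≤ a_i ≤ |F_i| − |F_{i−1}| − 1 for all i} and the set of Stembridge codes of length n, under which Σ a_i corresponds to the index of the code, and which is equivariant for the natural S_n-actions on both sets. -/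
open Finset

/-- the previous set `F (i-1)` in a chain, with `F (-1) = ∅` -/
def prevSet {n k : ℕ} (F : Fin k → Finset (Fin n)) (i : Fin k) : Finset (Fin n) :=
  if h : 0 < (i : ℕ) then F ⟨(i : ℕ) - 1, Nat.lt_of_le_of_lt (Nat.sub_le _ _) i.isLt⟩ else ∅

/-- Feichtner--Yuzvinsky basis data for the Chow ring of the Boolean matroid:
a strictly increasing chain `∅ = F₀ ⊊ F₁ ⊊ ⋯ ⊊ F_k ⊆ [n]` together with exponents
`1 ≤ aᵢ ≤ |Fᵢ| - |Fᵢ₋₁| - 1`. -/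
def IsFY {n : ℕ} (p : Σ k : ℕ, (Fin k → Finset (Fin n)) × (Fin k → ℕ)) : Prop :=
  StrictMono p.2.1 ∧
  ∀ i : Fin p.1, 1 ≤ p.2.2 i ∧ p.2.2 i + (prevSet p.2.1 i).card < (p.2.1 i).card

/-- total degree `Σ aᵢ` of the monomial data -/
def FYdeg {n : ℕ} (p : Σ k : ℕ, (Fin k → Finset (Fin n)) × (Fin k → ℕ)) : ℕ :=
  ∑ i, p.2.2 i

/-- the set `FY(B_n)` -/
def FYBn (n : ℕ) := {p : Σ k : ℕ, (Fin k → Finset (Fin n)) × (Fin k → ℕ) // IsFY p}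

/-- the action of a permutation of `[n]` on monomial data, replacing each `Fᵢ` by its image -/
def permFY {n : ℕ} (σ : Equiv.Perm (Fin n))
    (p : Σ k : ℕ, (Fin k → Finset (Fin n)) × (Fin k → ℕ)) :
    Σ k : ℕ, (Fin k → Finset (Fin n)) × (Fin k → ℕ) :=
  ⟨p.1, fun i => (p.2.1 i).image σ, p.2.2⟩

/-! ### auxiliary development -/

/-- `toAlpha F i = j+1` if `j` is least with `i ∈ F j`, and `0` if there is no such `j`. -/
def toAlpha {n k : ℕ} (F : Fin k → Finset (Fin n)) (i : Fin n) : ℕ :=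
  if h : ∃ j : Fin k, i ∈ F j then
    ((Finset.univ.filter fun j : Fin k => i ∈ F j).min'
      (by obtain ⟨j, hj⟩ := h; exact ⟨j, mem_filter.2 ⟨mem_univ j, hj⟩⟩)).val + 1
  else 0

lemma toAlpha_le {n k : ℕ} (F : Fin k → Finset (Fin n)) (i : Fin n) : toAlpha F i ≤ k := by
  unfold toAlpha
  split
  · exact Nat.succ_le_of_lt (Fin.isLt _)
  · exact Nat.zero_le _

lemma mem_toAlpha {n k : ℕ} {F : Fin k → Finset (Fin n)} (hF : StrictMono F)
    (j : Fin k) (i : Fin n) :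
    i ∈ F j ↔ 1 ≤ toAlpha F i ∧ toAlpha F i ≤ (j : ℕ) + 1 := by
  unfold toAlpha
  by_cases h : ∃ j : Fin k, i ∈ F j
  · rw [dif_pos h]
    constructor
    · intro hi
      have := Finset.min'_le (Finset.univ.filter fun j : Fin k => i ∈ F j) j
        (mem_filter.2 ⟨mem_univ j, hi⟩)
      rw [Fin.le_def] at this
      omega
    · rintro ⟨-, h2⟩
      have hm := Finset.min'_mem (Finset.univ.filter fun j : Fin k => i ∈ F j)
        (by obtain ⟨j', hj'⟩ := h; exact ⟨j', mem_filter.2 ⟨mem_univ j', hj'⟩⟩)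
      have hmem : i ∈ F _ := (mem_filter.1 hm).2
      exact hF.monotone (by rw [Fin.le_def]; omega) hmem
  · rw [dif_neg h]
    exact ⟨fun hi => absurd ⟨j, hi⟩ h, fun hc => absurd hc.1 (by omega)⟩

lemma filter_toAlpha_eq {n k : ℕ} {F : Fin k → Finset (Fin n)} (hF : StrictMono F)
    (j : Fin k) :
    (Finset.univ.filter fun i => toAlpha F i = (j : ℕ) + 1) = F j \ prevSet F j := by
  ext i
  simp only [mem_filter, mem_univ, true_and, mem_sdiff, prevSet]
  by_cases hj : 0 < (j : ℕ)
  · rw [dif_pos hj, mem_toAlpha hF, mem_toAlpha hF]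
    simp only [Fin.val_mk]
    omega
  · rw [dif_neg hj, mem_toAlpha hF]
    simp only [Finset.notMem_empty, not_false_iff, and_true]
    omega

lemma prevSet_subset {n k : ℕ} {F : Fin k → Finset (Fin n)} (hF : StrictMono F)
    (j : Fin k) : prevSet F j ⊆ F j := by
  unfold prevSet
  split
  · next h =>
    exact (hF (by rw [Fin.lt_def]; simpa using Nat.sub_lt h Nat.one_pos)).subset
  · exact Finset.empty_subset _

lemma occ_toAlpha {n k : ℕ} {F : Fin k → Finset (Fin n)} (hF : StrictMono F) (j : Fin k) :
    occ (toAlpha F) ((j : ℕ) + 1) = (F j).card - (prevSet F j).card := by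
  unfold occ
  rw [filter_toAlpha_eq hF, Finset.card_sdiff_of_subset (prevSet_subset hF j)]

lemma maxVal_toAlpha {n k : ℕ} {F : Fin k → Finset (Fin n)} {a : Fin k → ℕ}
    (h : IsFY ⟨k, F, a⟩) : maxVal (toAlpha F) = k := by
  have hmono : StrictMono F := h.1
  have hbd : ∀ i : Fin k, 1 ≤ a i ∧ a i + (prevSet F i).card < (F i).card := h.2
  apply le_antisymm
  · exact Finset.sup_le fun i _ => toAlpha_le F i
  · rcases Nat.eq_zero_or_pos k with hk | hk
    · omega
    · set j : Fin k := ⟨k - 1, by omega⟩ with hj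
      have h2 := hbd j
      have hsub := prevSet_subset hmono j
      have hcard := Finset.card_le_card hsub
      have hne : (F j \ prevSet F j).Nonempty := by
        rw [← Finset.card_pos, Finset.card_sdiff_of_subset hsub]
        omega
      obtain ⟨i, hi⟩ := hne
      have : toAlpha F i = (j : ℕ) + 1 := by
        have := filter_toAlpha_eq hmono j
        rw [← this] at hi
        exact (mem_filter.1 hi).2
      have hle : toAlpha F i ≤ maxVal (toAlpha F) := Finset.le_sup (mem_univ i)
      have hjv : (j : ℕ) = k - 1 := rfl
      omega

/-- the `f`-part of the code associated to monomial data -/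
def codeF {k : ℕ} (a : Fin k → ℕ) (j : ℕ) : ℕ :=
  if h : 1 ≤ j ∧ j ≤ k then a ⟨j - 1, by omega⟩ else 0

lemma isCode_toCode {n k : ℕ} {F : Fin k → Finset (Fin n)} {a : Fin k → ℕ}
    (h : IsFY ⟨k, F, a⟩) : IsCode (toAlpha F) (codeF a) := by
  have hmono : StrictMono F := h.1
  have hbd : ∀ i : Fin k, 1 ≤ a i ∧ a i + (prevSet F i).card < (F i).card := h.2
  have hM : maxVal (toAlpha F) = k := maxVal_toAlpha h
  have key : ∀ m (hm1 : 1 ≤ m) (hm2 : m ≤ k),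
      2 ≤ occ (toAlpha F) m ∧ codeF a m = a ⟨m - 1, by omega⟩ ∧
        a ⟨m - 1, by omega⟩ ≤ occ (toAlpha F) m - 1 := by
    intro m hm1 hm2
    set j : Fin k := ⟨m - 1, by omega⟩ with hj
    have hmj : m = (j : ℕ) + 1 := by
      have : (j : ℕ) = m - 1 := rfl
      omega
    have h2 := hbd j
    have hcard := Finset.card_le_card (prevSet_subset hmono j)
    have hocc : occ (toAlpha F) m = (F j).card - (prevSet F j).card := by
      rw [hmj]; exact occ_toAlpha hmono j
    refine ⟨by omega, ?_, by omega⟩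
    rw [codeF, dif_pos ⟨hm1, hm2⟩]
  refine ⟨fun m hm1 hm2 => (key m hm1 (by omega)).1, fun m hm1 hm2 => ?_, fun m hm => ?_⟩
  · obtain ⟨h1, h2, h3⟩ := key m hm1 (by omega)
    have h4 := (hbd ⟨m - 1, by omega⟩).1
    rw [h2]
    constructor <;> omega
  · rw [codeF, dif_neg (by omega)]

/-- the chain associated to a code -/
def chainOf {n : ℕ} (α : Fin n → ℕ) (j : ℕ) : Finset (Fin n) :=
  Finset.univ.filter fun i => 1 ≤ α i ∧ α i ≤ j + 1

lemma chain_card {n : ℕ} (α : Fin n → ℕ) {k : ℕ} (j : Fin k) :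
    (chainOf α (j : ℕ)).card =
      (prevSet (fun j' : Fin k => chainOf α (j' : ℕ)) j).card + occ α ((j : ℕ) + 1) := by
  unfold prevSet
  by_cases hj : 0 < (j : ℕ)
  · rw [dif_pos hj]
    show _ = (chainOf α ((j : ℕ) - 1)).card + occ α ((j : ℕ) + 1)
    have hsub : chainOf α ((j : ℕ) - 1) ⊆ chainOf α (j : ℕ) := by
      intro i hi
      simp only [chainOf, mem_filter, mem_univ, true_and] at *
      omega
    have hsd : chainOf α (j : ℕ) \ chainOf α ((j : ℕ) - 1) =
        Finset.univ.filter fun i => α i = (j : ℕ) + 1 := by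
      ext i
      simp only [chainOf, mem_sdiff, mem_filter, mem_univ, true_and]
      omega
    have h1 := Finset.card_sdiff_of_subset hsub
    have h2 := Finset.card_le_card hsub
    rw [hsd] at h1
    unfold occ
    omega
  · rw [dif_neg hj]
    show _ = (∅ : Finset (Fin n)).card + occ α ((j : ℕ) + 1)
    have h0 : (j : ℕ) = 0 := by omega
    have : chainOf α (j : ℕ) = Finset.univ.filter fun i => α i = 1 := by
      ext i
      simp only [chainOf, mem_filter, mem_univ, true_and, h0]
      omega
    rw [this, h0]
    simp [occ]

lemma isFY_toFY {n : ℕ} {α : Fin n → ℕ} {f : ℕ → ℕ} (h : IsCode α f) :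
    IsFY ⟨maxVal α, fun j => chainOf α (j : ℕ), fun j => f ((j : ℕ) + 1)⟩ := by
  have hex : ∀ j : Fin (maxVal α), ∃ i, α i = (j : ℕ) + 1 := by
    intro j
    have h2 := h.1 ((j : ℕ) + 1) (by omega) (by omega)
    have : (Finset.univ.filter fun i => α i = (j : ℕ) + 1).Nonempty := by
      rw [← Finset.card_pos]; unfold occ at h2; omega
    obtain ⟨i, hi⟩ := this
    exact ⟨i, (mem_filter.1 hi).2⟩
  constructor
  · intro j j' hjj'
    rw [Fin.lt_def] at hjj'
    have hsub : chainOf α (j : ℕ) ⊆ chainOf α (j' : ℕ) := by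
      intro i hi
      simp only [chainOf, mem_filter, mem_univ, true_and] at *
      omega
    obtain ⟨i, hi⟩ := hex j'
    have h1 : i ∈ chainOf α (j' : ℕ) := by
      simp only [chainOf, mem_filter, mem_univ, true_and]; omega
    have h2 : i ∉ chainOf α (j : ℕ) := by
      simp only [chainOf, mem_filter, mem_univ, true_and]; omega
    exact Finset.ssubset_iff_of_subset hsub |>.2 ⟨i, h1, h2⟩
  · show ∀ j : Fin (maxVal α), 1 ≤ f ((j : ℕ) + 1) ∧ f ((j : ℕ) + 1) +
        (prevSet (fun j' : Fin (maxVal α) => chainOf α (j' : ℕ)) j).card <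
        (chainOf α (j : ℕ)).card
    intro j
    have hjlt : (j : ℕ) < maxVal α := j.isLt
    have hcard := chain_card α j
    have hf := h.2.1 ((j : ℕ) + 1) (by omega) (by omega)
    have hocc := h.1 ((j : ℕ) + 1) (by omega) (by omega)
    exact ⟨hf.1, by omega⟩

/-- FY data sigma extensionality -/
lemma FYext {n : ℕ} {p q : Σ k : ℕ, (Fin k → Finset (Fin n)) × (Fin k → ℕ)}
    (h1 : p.1 = q.1)
    (h2 : ∀ (i : ℕ) (hp : i < p.1) (hq : i < q.1), p.2.1 ⟨i, hp⟩ = q.2.1 ⟨i, hq⟩)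
    (h3 : ∀ (i : ℕ) (hp : i < p.1) (hq : i < q.1), p.2.2 ⟨i, hp⟩ = q.2.2 ⟨i, hq⟩) :
    p = q := by
  obtain ⟨k1, F1, a1⟩ := p
  obtain ⟨k2, F2, a2⟩ := q
  dsimp only at h1
  subst h1
  simp only [Sigma.mk.inj_iff, heq_eq_eq, true_and]
  refine Prod.ext (funext fun j => ?_) (funext fun j => ?_)
  · simpa using h2 (j : ℕ) j.isLt j.isLt
  · simpa using h3 (j : ℕ) j.isLt j.isLt

def toCode {n : ℕ} (u : FYBn n) : StembridgeCode n :=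
  ⟨(toAlpha u.1.2.1, codeF u.1.2.2), by
    obtain ⟨⟨k, F, a⟩, h⟩ := u
    exact isCode_toCode h⟩

def toFY {n : ℕ} (c : StembridgeCode n) : FYBn n :=
  ⟨⟨maxVal c.1.1, fun j => chainOf c.1.1 (j : ℕ), fun j => c.1.2 ((j : ℕ) + 1)⟩, by
    obtain ⟨⟨α, f⟩, h⟩ := c
    exact isFY_toFY h⟩

lemma left_inv {n : ℕ} (u : FYBn n) : toFY (toCode u) = u := by
  obtain ⟨⟨k, F, a⟩, h⟩ := u
  apply Subtype.ext
  have hM : maxVal (toAlpha F) = k := maxVal_toAlpha h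
  have hmono : StrictMono F := h.1
  refine FYext hM (fun i hp hq => ?_) (fun i hp hq => ?_)
  · have hq' : i < k := hq
    ext x
    show x ∈ chainOf (toAlpha F) i ↔ x ∈ F ⟨i, hq⟩
    rw [show (⟨i, hq⟩ : Fin k) = ⟨i, hq'⟩ from rfl, mem_toAlpha hmono ⟨i, hq'⟩ x]
    simp only [chainOf, mem_filter, mem_univ, true_and, Fin.val_mk]
  · have hq' : i < k := hq
    show codeF a (i + 1) = a ⟨i, hq⟩
    rw [codeF, dif_pos ⟨by omega, by omega⟩]
    exact congrArg a (Fin.ext (by simp))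

lemma right_inv {n : ℕ} (c : StembridgeCode n) : toCode (toFY c) = c := by
  obtain ⟨⟨α, f⟩, h⟩ := c
  replace h : IsCode α f := h
  apply Subtype.ext
  refine Prod.ext ?_ ?_
  · show toAlpha (fun j : Fin (maxVal α) => chainOf α (j : ℕ)) = α
    funext i
    by_cases hα : α i = 0
    · unfold toAlpha
      rw [dif_neg]
      · omega
      · rintro ⟨j, hj⟩
        simp only [chainOf, mem_filter, mem_univ, true_and] at hj
        omega
    · have h1 : 1 ≤ α i := by omega
      have hik : α i ≤ maxVal α := Finset.le_sup (mem_univ i)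
      have hlt : α i - 1 < maxVal α := by omega
      have hmem : i ∈ chainOf α ((⟨α i - 1, hlt⟩ : Fin (maxVal α)) : ℕ) := by
        show i ∈ chainOf α (α i - 1)
        simp only [chainOf, mem_filter, mem_univ, true_and]
        omega
      have hne : (Finset.univ.filter fun j : Fin (maxVal α) =>
          i ∈ chainOf α (j : ℕ)).Nonempty :=
        ⟨⟨α i - 1, hlt⟩, mem_filter.2 ⟨mem_univ _, hmem⟩⟩
      have hmin : (Finset.univ.filter fun j : Fin (maxVal α) =>
          i ∈ chainOf α (j : ℕ)).min' hne = ⟨α i - 1, hlt⟩ := by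
        apply le_antisymm
        · exact Finset.min'_le (Finset.univ.filter fun j : Fin (maxVal α) =>
            i ∈ chainOf α (j : ℕ)) ⟨α i - 1, hlt⟩ (mem_filter.2 ⟨mem_univ _, hmem⟩)
        · apply Finset.le_min'
          intro y hy
          have hy2 := (mem_filter.1 hy).2
          simp only [chainOf, mem_filter, mem_univ, true_and] at hy2
          rw [Fin.le_def]
          show α i - 1 ≤ (y : ℕ)
          omega
      unfold toAlpha
      rw [dif_pos ⟨⟨α i - 1, hlt⟩, hmem⟩, hmin]
      show α i - 1 + 1 = α i
      omega
  · show codeF (fun j : Fin (maxVal α) => f ((j : ℕ) + 1)) = f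
    funext m
    rw [codeF]
    by_cases hm : 1 ≤ m ∧ m ≤ maxVal α
    · rw [dif_pos hm]
      show f (m - 1 + 1) = f m
      congr 1
      omega
    · rw [dif_neg hm]
      exact (h.2.2 m (by omega)).symm

lemma codeIndex_toCode {n : ℕ} (u : FYBn n) :
    codeIndex (toCode u).1.1 (toCode u).1.2 = FYdeg u.1 := by
  obtain ⟨⟨k, F, a⟩, h⟩ := u
  show codeIndex (toAlpha F) (codeF a) = ∑ i, a i
  rw [codeIndex, maxVal_toAlpha h]
  rw [Finset.sum_bij' (fun (m : ℕ) (hm : m ∈ Finset.Icc 1 k) =>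
        (⟨m - 1, by simp at hm; omega⟩ : Fin k))
      (fun (j : Fin k) _ => (j : ℕ) + 1) ?_ ?_ ?_ ?_ ?_]
  · intro m hm
    exact mem_univ _
  · intro j _
    simp only [Finset.mem_Icc]
    omega
  · intro m hm
    simp only [Finset.mem_Icc] at hm
    show m - 1 + 1 = m
    omega
  · intro j _
    simp
  · intro m hm
    simp only [Finset.mem_Icc] at hm
    rw [codeF, dif_pos ⟨hm.1, hm.2⟩]

lemma toAlpha_image {n k : ℕ} (σ : Equiv.Perm (Fin n)) (F : Fin k → Finset (Fin n))
    (i : Fin n) :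
    toAlpha (fun j => (F j).image σ) i = toAlpha F (σ⁻¹ i) := by
  have key : ∀ j, i ∈ (F j).image σ ↔ σ⁻¹ i ∈ F j := by
    intro j
    constructor
    · intro hi
      obtain ⟨x, hx, rfl⟩ := Finset.mem_image.1 hi
      simpa using hx
    · intro hi
      exact Finset.mem_image.2 ⟨σ⁻¹ i, hi, by simp⟩
  simp only [toAlpha, key]

theorem stmt3 (n : ℕ) :
    ∃ e : FYBn n ≃ StembridgeCode n,
      (∀ u : FYBn n, codeIndex (e u).1.1 (e u).1.2 = FYdeg u.1) ∧
      (∀ (σ : Equiv.Perm (Fin n)) (u v : FYBn n), v.1 = permFY σ u.1 →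
        (e v).1.1 = (e u).1.1 ∘ ⇑σ⁻¹ ∧ (e v).1.2 = (e u).1.2) := by
  refine ⟨⟨toCode, toFY, left_inv, right_inv⟩, fun u => codeIndex_toCode u, ?_⟩
  intro σ u v hv
  constructor
  · show (toCode v).1.1 = (toCode u).1.1 ∘ ⇑σ⁻¹
    show toAlpha v.1.2.1 = toAlpha u.1.2.1 ∘ ⇑σ⁻¹
    rw [hv]
    funext i
    exact toAlpha_image σ u.1.2.1 i
  · show (toCode v).1.2 = (toCode u).1.2
    show codeF v.1.2.2 = codeF u.1.2.2
    rw [hv]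
    rfl
end

section
/- The cardinality of ~FY(B_n) equals Ã_n(1) = 1 + Σ_{k=1}^n C(n,k)·k!. -/
open Finset

/-- Feichtner--Yuzvinsky-type basis data for the augmented Chow ring of `B_n`:
a strictly increasing chain `∅ = F₀ ⊊ F₁ ⊊ ⋯ ⊊ F_k ⊆ [n]` together with exponents
`1 ≤ a₁ ≤ |F₁|` and `1 ≤ aᵢ ≤ |Fᵢ| - |Fᵢ₋₁| - 1` for `i ≥ 2`
(the case `k = 0` is the empty monomial). -/
def IsAugFY {n : ℕ} (p : Σ k : ℕ, (Fin k → Finset (Fin n)) × (Fin k → ℕ)) : Prop :=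
  StrictMono p.2.1 ∧
  ∀ i : Fin p.1, 1 ≤ p.2.2 i ∧
    (if (i : ℕ) = 0 then p.2.2 i ≤ (p.2.1 i).card
     else p.2.2 i + (prevSet p.2.1 i).card < (p.2.1 i).card)

/-- the set `~FY(B_n)` -/
def AugFYBn (n : ℕ) := {p : Σ k : ℕ, (Fin k → Finset (Fin n)) × (Fin k → ℕ) // IsAugFY p}

/-!
Read a chain from its top. Removing the top pair `(M, a)` leaves either nothing (and then
`1 ≤ a ≤ |M|`) or an element of `~FY(B_n)` with top set some `P ⊊ M` (and then `a` has
`|M| - |P| - 1` values). So the number `D(M)` of elements with top set `M ≠ ∅` satisfies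
`D(M) = |M| + ∑_{∅ ≠ P ⊊ M} (|M| - |P| - 1) D(P)`, which `D(M) = |M|!` solves: with `m = |M|`,
`C(m, j) j! (m - j - 1) = m^{(j+1)} - m^{(j)}` in falling factorials, and the sum telescopes.
Summing over `M` and adding the empty chain gives `1 + ∑ C(n, k) k!`.
-/

open scoped Nat

lemma add_sum_range_choose_mul_eq_descFactorial {m J : ℕ} (hJ : 1 ≤ J) (hJm : J ≤ m) :
    m + ∑ j ∈ range J, m.choose j * ((m - j - 1) * if j = 0 then 0 else j !) =
      m.descFactorial J := by
  induction J, hJ using Nat.le_induction with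
  | base => simp
  | succ J _ ih =>
    have hterm : m.choose J * ((m - J - 1) * J !) = (m - J - 1) * m.descFactorial J := by
      rw [Nat.descFactorial_eq_factorial_mul_choose]; ring
    rw [sum_range_succ, ← add_assoc, ih (by omega), if_neg (by omega), hterm,
      Nat.descFactorial_succ, add_comm, ← Nat.succ_mul]
    congr 1
    omega

lemma add_sum_choose_mul_eq_factorial {m : ℕ} (hm : 1 ≤ m) :
    m + ∑ j ∈ range (m + 1), m.choose j * ((m - j - 1) * if j = 0 then 0 else j !) = m ! := by
  rw [sum_range_succ, ← add_assoc, add_sum_range_choose_mul_eq_descFactorial hm le_rfl,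
    Nat.descFactorial_self]
  simp

section AugChain

variable {α : Type*}

/-- An element of `~FY(B_n)` as the list `(F_k, a_k), …, (F_1, a_1)` read from the top of the
chain down, so that the bound `a_1 ≤ |F_1|` sits on the last entry. -/
def AugChain (l : List (Finset α × ℕ)) : Prop :=
  (∀ x ∈ l, 1 ≤ x.2) ∧ l.IsChain (fun x y => y.1 ⊂ x.1 ∧ x.2 + y.1.card < x.1.card) ∧
    ∀ x ∈ l.getLast?, x.2 ≤ x.1.card

lemma augChain_nil : AugChain ([] : List (Finset α × ℕ)) := by
  simp [AugChain]

lemma augChain_singleton {F : Finset α} {a : ℕ} : AugChain [(F, a)] ↔ 1 ≤ a ∧ a ≤ F.card := by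
  simp [AugChain]

lemma augChain_cons_cons {F G : Finset α} {a b : ℕ} {t : List (Finset α × ℕ)} :
    AugChain ((F, a) :: (G, b) :: t) ↔
      G ⊂ F ∧ 1 ≤ a ∧ a + G.card < F.card ∧ AugChain ((G, b) :: t) := by
  simp only [AugChain, List.forall_mem_cons, List.isChain_cons_cons, List.getLast?_cons_cons]
  tauto

def AugChainTop (M : Finset α) : Type _ :=
  {q : ℕ × List (Finset α × ℕ) // AugChain ((M, q.1) :: q.2)}

def augChainEquivOption :
    {l : List (Finset α × ℕ) // AugChain l} ≃ Option (Σ M : Finset α, AugChainTop M) where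
  toFun
    | ⟨[], _⟩ => none
    | ⟨(M, a) :: t, h⟩ => some ⟨M, (a, t), h⟩
  invFun
    | none => ⟨[], augChain_nil⟩
    | some ⟨M, (a, t), h⟩ => ⟨(M, a) :: t, h⟩
  left_inv
    | ⟨[], _⟩ => rfl
    | ⟨_ :: _, _⟩ => rfl
  right_inv
    | none => rfl
    | some _ => rfl

variable [DecidableEq α]

def augChainTopEquiv (M : Finset α) :
    AugChainTop M ≃
      Icc 1 M.card ⊕ Σ P : M.ssubsets, Ico 1 (M.card - P.1.card) × AugChainTop P.1 where
  toFun
    | ⟨(a, []), h⟩ => .inl ⟨a, mem_Icc.2 (augChain_singleton.1 h)⟩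
    | ⟨(a, (P, b) :: t), h⟩ =>
      have hc := augChain_cons_cons.1 h
      .inr ⟨⟨P, mem_ssubsets.2 hc.1⟩, ⟨a, mem_Ico.2 ⟨hc.2.1, (by omega : a < M.card - P.card)⟩⟩,
        ⟨(b, t), hc.2.2.2⟩⟩
  invFun
    | .inl ⟨a, ha⟩ => ⟨(a, []), augChain_singleton.2 (mem_Icc.1 ha)⟩
    | .inr ⟨⟨P, hP⟩, ⟨a, ha⟩, ⟨(b, t), ht⟩⟩ =>
      have ha : 1 ≤ a ∧ a < M.card - P.card := mem_Ico.1 ha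
      ⟨(a, (P, b) :: t), augChain_cons_cons.2 ⟨mem_ssubsets.1 hP, ha.1, by omega, ht⟩⟩
  left_inv
    | ⟨(_, []), _⟩ => rfl
    | ⟨(_, _ :: _), _⟩ => rfl
  right_inv
    | .inl _ => rfl
    | .inr ⟨⟨_, _⟩, ⟨_, _⟩, ⟨(_, _), _⟩⟩ => rfl

instance (M : Finset α) : Finite (AugChainTop M) := by
  induction M using Finset.strongInduction with
  | H M ih =>
    have (P : M.ssubsets) : Finite (AugChainTop P.1) := ih _ (mem_ssubsets.1 P.2)
    exact Finite.of_equiv _ (augChainTopEquiv M).symm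

instance : IsEmpty (AugChainTop (∅ : Finset α)) where
  false
    | ⟨(_, []), h⟩ => by have := augChain_singleton.1 h; rw [card_empty] at this; omega
    | ⟨(_, (_, _) :: _), h⟩ => not_ssubset_empty _ (augChain_cons_cons.1 h).1

lemma card_augChainTop (M : Finset α) :
    Nat.card (AugChainTop M) = if M = ∅ then 0 else M.card ! := by
  induction M using Finset.strongInduction with
  | H M ih =>
    split_ifs with hM
    · subst hM; exact Nat.card_of_isEmpty
    have hsum : ∑ P : M.ssubsets, (M.card - P.1.card - 1) * Nat.card (AugChainTop P.1) =
        ∑ P ∈ M.powerset, (M.card - P.card - 1) * if P.card = 0 then 0 else P.card ! := by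
      -- the missing term `P = M` is zero because `#M - #M - 1 = 0`
      rw [sum_coe_sort M.ssubsets (fun P => (M.card - P.card - 1) * Nat.card (AugChainTop P)),
        ← sum_erase M.powerset (a := M) (by simp)]
      exact sum_congr rfl fun P hP => by simp only [ih P (mem_ssubsets.1 hP), card_eq_zero]
    rw [Nat.card_congr (augChainTopEquiv M), Nat.card_sum, Nat.card_eq_finsetCard, Nat.card_Icc,
      Nat.card_sigma]
    simp only [Nat.card_prod, Nat.card_eq_finsetCard, Nat.card_Ico]
    rw [hsum, sum_powerset_apply_card (fun j => (M.card - j - 1) * if j = 0 then 0 else j !),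
      Nat.add_sub_cancel]
    exact add_sum_choose_mul_eq_factorial (card_pos.2 (nonempty_iff_ne_empty.2 hM))

end AugChain

lemma prevSet_succ {n k : ℕ} (F : Fin (k + 1) → Finset (Fin n)) (i : Fin k) :
    prevSet F i.succ = F i.castSucc :=
  rfl

lemma isAugFY_iff_augChain {n : ℕ} (p : Σ k : ℕ, (Fin k → Finset (Fin n)) × (Fin k → ℕ)) :
    IsAugFY p ↔ AugChain (List.ofFn fun i => (p.2.1 i, p.2.2 i)).reverse := by
  obtain ⟨_ | k, F, a⟩ := p
  · simp [IsAugFY, AugChain, Subsingleton.strictMono]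
  simp only [IsAugFY, AugChain, List.mem_reverse, List.mem_ofFn, List.isChain_reverse,
    List.getLast?_reverse, List.isChain_ofFn, Fin.strictMono_iff_lt_succ, forall_exists_index,
    forall_apply_eq_imp_iff, Nat.add_lt_add_iff_right]
  simp only [List.ofFn_succ, List.head?_cons, Option.mem_def, Option.some.injEq, forall_eq',
    Fin.forall_fin_succ (n := k), Fin.val_zero, Fin.val_succ, Nat.add_one_ne_zero, if_true,
    if_false, prevSet_succ, Fin.forall_iff, Fin.castSucc_mk, Fin.succ_mk, forall_and]
  tauto

def augFYEquiv (n : ℕ) : AugFYBn n ≃ {l : List (Finset (Fin n) × ℕ) // AugChain l} :=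
  Equiv.subtypeEquiv
    (((Equiv.sigmaCongrRight fun _ => (Equiv.arrowProdEquivProdArrow _ _ _).symm).trans
      List.equivSigmaTuple.symm).trans (List.reverse_involutive.toPerm _))
    isAugFY_iff_augChain

theorem stmt11 (n : ℕ) :
    Nat.card (AugFYBn n) = 1 + ∑ k ∈ Finset.Icc 1 n, n.choose k * Nat.factorial k := by
  rw [Nat.card_congr ((augFYEquiv n).trans augChainEquivOption), Finite.card_option,
    Nat.card_sigma, add_comm]
  simp only [card_augChainTop, ← card_eq_zero]
  rw [← powerset_univ, sum_powerset_apply_card (fun j => if j = 0 then 0 else j !), card_univ,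
    Fintype.card_fin, range_eq_Ico, sum_eq_sum_Ico_succ_bot n.succ_pos, if_pos rfl, smul_zero,
    zero_add]
  refine congrArg (1 + ·) (sum_congr (Ico_add_one_right_eq_Icc 1 n) fun k hk => ?_)
  rw [if_neg (by simp at hk; omega), smul_eq_mul]
end

section
/- Let M be a loopless matroid on [n] with lattice of flats L(M) and independence complex I(M). In the poset ~L(M) = L(M) ⊎ I(M) (with I ⋖ cl_M(I)_* for each independent set I, internal orders preserved), take the building set G = { {i} : i ∈ [n] } ∪ { F_* : F ∈ L(M) }. Then a subset of G is nested if and only if it has the form { {i} : i ∈ I } ∪ { F_* : F ∈ 𝓕 } for some independent set I ∈ I(M) and some chain 𝓕 of flats with I ⊆ min(𝓕) (I compatible with 𝓕). -/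
open Finset

/-- the poset `~L(M) = I(M) ⊎ L(M)` -/
abbrev TildeL {α : Type*} (M : Matroid α) :=
  {I : Set α // M.Indep I} ⊕ {F : Set α // M.IsFlat F}

/-- the order on `~L(M)`: independent sets and flats are each ordered by inclusion,
and an independent set `I` lies below a flat `F_*` iff `I ⊆ F`
(this is the order generated by the covering relations `I ⋖ (cl I)_*`). -/
def tle {α : Type*} {M : Matroid α} : TildeL M → TildeL M → Prop
  | Sum.inl I, Sum.inl J => I.1 ⊆ J.1
  | Sum.inl I, Sum.inr F => I.1 ⊆ F.1
  | Sum.inr _, Sum.inl _ => False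
  | Sum.inr F, Sum.inr G => F.1 ⊆ G.1

/-- the building set `G = {{i} : i ∈ E} ∪ {F_* : F ∈ L(M)}` in `~L(M)` -/
def tBuilding {α : Type*} (M : Matroid α) : Set (TildeL M) :=
  {x | (∃ i : α, ∃ h : M.Indep {i}, x = Sum.inl ⟨{i}, h⟩) ∨
       (∃ F : Set α, ∃ h : M.IsFlat F, x = Sum.inr ⟨F, h⟩)}

/-- `g` is the least upper bound of `s` in the poset `(~L(M), tle)` -/
def IsTLUB {α : Type*} {M : Matroid α} (s : Set (TildeL M)) (g : TildeL M) : Prop :=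
  (∀ x ∈ s, tle x g) ∧ ∀ z : TildeL M, (∀ x ∈ s, tle x z) → tle g z

/-- `N ⊆ tBuilding M` is nested: for any pairwise incomparable elements of `N`
(at least two of them), their join is not in the building set. -/
def TNested {α : Type*} (M : Matroid α) (N : Set (TildeL M)) : Prop :=
  N ⊆ tBuilding M ∧
  ∀ s ⊆ N, s.Finite → 2 ≤ s.ncard →
    (∀ x ∈ s, ∀ y ∈ s, x ≠ y → ¬ tle x y ∧ ¬ tle y x) →
    ∀ g ∈ tBuilding M, ¬ IsTLUB s g

/-!
In `~L(M)` no flat lies below an independent set, so a finite antichain without an independent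
upper bound has a join in the building set, namely the flat spanned by it. Applied to two
incomparable flats, to a point outside a flat, and to the points of a finite dependent set
(the matroid is finitary), this shows that the flats of a nested set form a chain, that its
points lie in all of its flats, and that they are independent. Conversely, in
`{{i} : i ∈ I} ∪ {F_* : F ∈ 𝓕}` every flat is comparable with every other element, so an antichain
with at least two elements consists of points of `I`; its join lies below `I`, so it is not a
flat, and it is not a single point either.
-/

lemma Matroid.IsFlat.closure_subset_of_subset {α : Type*} {M : Matroid α} {F X : Set α}
    (hF : M.IsFlat F) (hXF : X ⊆ F) : M.closure X ⊆ F :=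
  hF.closure ▸ M.closure_subset_closure hXF

lemma Matroid.indep_of_ncard_le_one {α : Type*} {M : Matroid α} (hL : ∀ i, M.Indep {i})
    {J : Set α} (hJ : J.Finite) (hJ1 : J.ncard ≤ 1) : M.Indep J := by
  obtain rfl | ⟨i, rfl⟩ := (Set.ncard_le_one_iff_eq hJ).1 hJ1
  exacts [M.empty_indep, hL i]

namespace TildeL

variable {α : Type*} {M : Matroid α}

def carrier : TildeL M → Set α := Sum.elim Subtype.val Subtype.val

lemma carrier_subset_ground (x : TildeL M) : carrier x ⊆ M.E := by
  rcases x with I | F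
  exacts [I.2.subset_ground, F.2.subset_ground]

lemma tle_refl (x : TildeL M) : tle x x := by
  rcases x with I | F
  exacts [subset_rfl, subset_rfl]

lemma tle_inr_iff {x : TildeL M} {F : {F // M.IsFlat F}} :
    tle x (Sum.inr F) ↔ carrier x ⊆ F.1 := by
  rcases x with I | G <;> rfl

lemma not_tle_inr_inl {F : {F // M.IsFlat F}} {J : {I // M.Indep I}} :
    ¬ tle (Sum.inr F) (Sum.inl J) :=
  id

lemma isTLUB_closure {s : Set (TildeL M)}
    (hs : ∀ J : {I // M.Indep I}, ∃ x ∈ s, ¬ tle x (Sum.inl J)) :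
    IsTLUB s (Sum.inr ⟨M.closure (⋃ x ∈ s, carrier x), M.isFlat_closure _⟩) := by
  have hground : (⋃ x ∈ s, carrier x) ⊆ M.E :=
    Set.iUnion₂_subset fun x _ ↦ carrier_subset_ground x
  refine ⟨fun x hx ↦ tle_inr_iff.2 ?_, ?_⟩
  · exact (Set.subset_biUnion_of_mem hx).trans (M.subset_closure _ hground)
  · rintro (J | H) hz
    · obtain ⟨x, hx, hxJ⟩ := hs J
      exact hxJ (hz x hx)
    · exact H.2.closure_subset_of_subset (Set.iUnion₂_subset fun x hx ↦ tle_inr_iff.1 (hz x hx))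

def pt (hL : ∀ i, M.Indep {i}) (i : α) : TildeL M := Sum.inl ⟨{i}, hL i⟩

variable {hL : ∀ i, M.Indep {i}}

lemma pt_injective : Function.Injective (pt hL) := fun _ _ h ↦
  Set.singleton_injective (congrArg Subtype.val (Sum.inl_injective h))

lemma tle_pt_pt {i j : α} : tle (pt hL i) (pt hL j) ↔ i = j :=
  Set.singleton_subset_singleton

lemma tle_pt_inl {i : α} {J : {I // M.Indep I}} : tle (pt hL i) (Sum.inl J) ↔ i ∈ J.1 :=
  Set.singleton_subset_iff

lemma tle_pt_inr {i : α} {F : {F // M.IsFlat F}} : tle (pt hL i) (Sum.inr F) ↔ i ∈ F.1 :=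
  Set.singleton_subset_iff

def pointsAndFlats (M : Matroid α) (I : Set α) (𝓕 : Set (Set α)) : Set (TildeL M) :=
  {x | (∃ i ∈ I, ∃ h : M.Indep {i}, x = Sum.inl ⟨{i}, h⟩) ∨
    (∃ F ∈ 𝓕, ∃ h : M.IsFlat F, x = Sum.inr ⟨F, h⟩)}

lemma pointsAndFlats_subset_tBuilding (I : Set α) (𝓕 : Set (Set α)) :
    pointsAndFlats M I 𝓕 ⊆ tBuilding M := by
  rintro x (⟨i, -, h, rfl⟩ | ⟨F, -, h, rfl⟩)
  exacts [Or.inl ⟨i, h, rfl⟩, Or.inr ⟨F, h, rfl⟩]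

end TildeL

open TildeL

section Nested

variable {α : Type*} {M : Matroid α} {N : Set (TildeL M)}

lemma TNested.exists_indep_upperBound (hN : TNested M N) {s : Set (TildeL M)} (hsN : s ⊆ N)
    (hs : s.Finite) (hs2 : 2 ≤ s.ncard)
    (hanti : ∀ x ∈ s, ∀ y ∈ s, x ≠ y → ¬ tle x y ∧ ¬ tle y x) :
    ∃ J : {I // M.Indep I}, ∀ x ∈ s, tle x (Sum.inl J) := by
  by_contra! h
  exact hN.2 s hsN hs hs2 hanti _ (Or.inr ⟨_, _, rfl⟩) (isTLUB_closure h)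

lemma TNested.exists_indep_upperBound_pair (hN : TNested M N) {x y : TildeL M} (hx : x ∈ N)
    (hy : y ∈ N) (hxy : ¬ tle x y) (hyx : ¬ tle y x) :
    ∃ J : {I // M.Indep I}, tle x (Sum.inl J) ∧ tle y (Sum.inl J) := by
  have hne : x ≠ y := by
    rintro rfl
    exact hxy (tle_refl x)
  obtain ⟨J, hJ⟩ := hN.exists_indep_upperBound (s := {x, y})
    (Set.insert_subset hx (Set.singleton_subset_iff.2 hy)) (Set.toFinite _)
    (Set.ncard_pair hne).ge (by rintro a (rfl | rfl) b (rfl | rfl) hab <;> simp_all)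
  exact ⟨J, hJ x (Set.mem_insert x {y}), hJ y (Set.mem_insert_of_mem x rfl)⟩

lemma TNested.isChain_flats (hN : TNested M N) :
    IsChain (· ⊆ ·) {F | ∃ h : M.IsFlat F, Sum.inr ⟨F, h⟩ ∈ N} := by
  rintro F ⟨hF, hFN⟩ G ⟨hG, hGN⟩ -
  by_contra! h
  obtain ⟨J, hFJ, -⟩ := hN.exists_indep_upperBound_pair hFN hGN h.1 h.2
  exact not_tle_inr_inl hFJ

section Points

variable (hL : ∀ i, M.Indep {i})

lemma TNested.mem_of_pt_mem (hN : TNested M N) {i : α} {F : Set α} {hF : M.IsFlat F}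
    (hi : pt hL i ∈ N) (hFN : Sum.inr ⟨F, hF⟩ ∈ N) : i ∈ F := by
  by_contra hiF
  obtain ⟨J, -, hFJ⟩ :=
    hN.exists_indep_upperBound_pair hi hFN (mt tle_pt_inr.1 hiF) not_tle_inr_inl
  exact not_tle_inr_inl hFJ

lemma TNested.indep_points [M.Finitary] (hN : TNested M N) : M.Indep {i | pt hL i ∈ N} := by
  refine M.indep_of_forall_finite_subset_indep _ fun J hJI hJ ↦ ?_
  by_contra hJdep
  have hJ2 : 2 ≤ J.ncard := by
    by_contra! h
    exact hJdep (M.indep_of_ncard_le_one hL hJ (by omega))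
  have hanti : ∀ x ∈ pt hL '' J, ∀ y ∈ pt hL '' J, x ≠ y → ¬ tle x y ∧ ¬ tle y x := by
    rintro _ ⟨i, -, rfl⟩ _ ⟨j, -, rfl⟩ hij
    have hij : i ≠ j := ne_of_apply_ne _ hij
    exact ⟨mt tle_pt_pt.1 hij, mt tle_pt_pt.1 hij.symm⟩
  obtain ⟨K, hK⟩ := hN.exists_indep_upperBound (by rintro _ ⟨i, hi, rfl⟩; exact hJI hi)
    (hJ.image _) (by rwa [Set.ncard_image_of_injective _ pt_injective]) hanti
  exact hJdep (K.2.subset fun i hi ↦ tle_pt_inl.1 (hK _ ⟨i, hi, rfl⟩))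

lemma TNested.eq_pointsAndFlats (hN : TNested M N) :
    N = pointsAndFlats M {i | pt hL i ∈ N} {F | ∃ h : M.IsFlat F, Sum.inr ⟨F, h⟩ ∈ N} := by
  ext x
  constructor
  · intro hx
    rcases hN.1 hx with ⟨i, h, rfl⟩ | ⟨F, h, rfl⟩
    exacts [Or.inl ⟨i, hx, h, rfl⟩, Or.inr ⟨F, ⟨h, hx⟩, h, rfl⟩]
  · rintro (⟨i, hi, h, rfl⟩ | ⟨F, hF, h, rfl⟩)
    exacts [hi, hF.2]

end Points

lemma TNested.exists_compatible [M.Finitary] (hL : ∀ i, M.Indep {i}) (hN : TNested M N) :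
    ∃ (I : Set α) (_ : M.Indep I) (𝓕 : Set (Set α)),
      (∀ F ∈ 𝓕, M.IsFlat F) ∧ IsChain (· ⊆ ·) 𝓕 ∧ (∀ F ∈ 𝓕, I ⊆ F) ∧
      N = pointsAndFlats M I 𝓕 :=
  ⟨_, hN.indep_points hL, _, fun _ hF ↦ hF.1, hN.isChain_flats,
    fun _ hF _ hi ↦ hN.mem_of_pt_mem hL hi hF.2, hN.eq_pointsAndFlats hL⟩

lemma tNested_pointsAndFlats {I : Set α} {𝓕 : Set (Set α)} (hI : M.Indep I)
    (h𝓕 : IsChain (· ⊆ ·) 𝓕) (hI𝓕 : ∀ F ∈ 𝓕, I ⊆ F) : TNested M (pointsAndFlats M I 𝓕) := by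
  refine ⟨pointsAndFlats_subset_tBuilding I 𝓕, fun s hsN hs hs2 hanti g hg hg_lub ↦ ?_⟩
  have hpts : ∀ x ∈ s, ∃ i ∈ I, ∃ h : M.Indep {i}, x = Sum.inl ⟨{i}, h⟩ := by
    intro x hx
    rcases hsN hx with hpt | ⟨F, hF𝓕, hF, rfl⟩
    · exact hpt
    obtain ⟨y, hy, hyx⟩ := Set.exists_ne_of_one_lt_ncard hs2 (Sum.inr ⟨F, hF⟩)
    obtain ⟨hyF, hFy⟩ := hanti y hy _ hx hyx
    rcases hsN hy with ⟨i, hi, h, rfl⟩ | ⟨G, hG𝓕, hG, rfl⟩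
    · exact absurd (Set.singleton_subset_iff.2 (hI𝓕 F hF𝓕 hi)) hyF
    · rcases eq_or_ne G F with rfl | hGF
      · exact absurd subset_rfl hyF
      rcases h𝓕 hG𝓕 hF𝓕 hGF with h | h
      exacts [absurd h hyF, absurd h hFy]
  have hgI : tle g (Sum.inl ⟨I, hI⟩) := hg_lub.2 _ fun x hx ↦ by
    obtain ⟨i, hi, h, rfl⟩ := hpts x hx
    exact Set.singleton_subset_iff.2 hi
  rcases hg with ⟨k, hk, rfl⟩ | ⟨F, hF, rfl⟩
  · have hsk : s ⊆ {Sum.inl ⟨{k}, hk⟩} := fun x hx ↦ by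
      obtain ⟨i, -, h, rfl⟩ := hpts x hx
      obtain rfl : i = k := Set.singleton_subset_singleton.1 (hg_lub.1 _ hx)
      rfl
    have := (Set.ncard_le_ncard hsk).trans (Set.ncard_singleton _).le
    omega
  · exact not_tle_inr_inl hgI

end Nested

theorem stmt14_general {n : ℕ} (M : Matroid (Fin n))
    (hL : ∀ i : Fin n, M.Indep {i}) (N : Set (TildeL M)) :
    TNested M N ↔
      ∃ (I : Set (Fin n)) (_ : M.Indep I) (𝓕 : Set (Set (Fin n))),
        (∀ F ∈ 𝓕, M.IsFlat F) ∧ IsChain (· ⊆ ·) 𝓕 ∧ (∀ F ∈ 𝓕, I ⊆ F) ∧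
        N = {x : TildeL M |
          (∃ i ∈ I, ∃ h : M.Indep {i}, x = Sum.inl ⟨{i}, h⟩) ∨
          (∃ F ∈ 𝓕, ∃ h : M.IsFlat F, x = Sum.inr ⟨F, h⟩)} := by
  refine ⟨fun hN ↦ hN.exists_compatible hL, ?_⟩
  rintro ⟨I, hI, 𝓕, -, h𝓕, hI𝓕, rfl⟩
  exact tNested_pointsAndFlats hI h𝓕 hI𝓕

theorem stmt14 {n : ℕ} (M : Matroid (Fin n)) (hE : M.E = Set.univ)
    (hL : ∀ i : Fin n, M.Indep {i}) (N : Set (TildeL M)) (hN : N ⊆ tBuilding M) :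
    TNested M N ↔
      ∃ (I : Set (Fin n)) (_ : M.Indep I) (𝓕 : Set (Set (Fin n))),
        (∀ F ∈ 𝓕, M.IsFlat F) ∧ IsChain (· ⊆ ·) 𝓕 ∧ (∀ F ∈ 𝓕, I ⊆ F) ∧
        N = {x : TildeL M |
          (∃ i ∈ I, ∃ h : M.Indep {i}, x = Sum.inl ⟨{i}, h⟩) ∨
          (∃ F ∈ 𝓕, ∃ h : M.IsFlat F, x = Sum.inr ⟨F, h⟩)} :=
  stmt14_general M hL N
end

section
/- For the Boolean matroid B_n, the faces of the augmented Bergman fan (cones σ_{I≤𝓕} indexed by compatible pairs of an independent set I ⊆ [n] and a chain 𝓕 of proper subsets of [n] with I ⊆ min(𝓕)) are in inclusion-preserving bijection with the faces of the reduced nested set complex of the Boolean lattice on [n] ∪ {*} with respect to the graphical building set B(K_{1,n}). -/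
open Finset

/-- the star graph `K_{1,n}` on vertex set `[n] ∪ {*}`, with `*` encoded as `none` -/
def starGraph (n : ℕ) : SimpleGraph (Option (Fin n)) :=
  SimpleGraph.fromRel fun a _ => a = none

/-- the graphical building set of a graph: nonempty vertex subsets inducing a
connected subgraph -/
def graphBuilding {V : Type*} (G : SimpleGraph V) : Set (Finset V) :=
  {I : Finset V | I.Nonempty ∧ (SimpleGraph.induce (↑I : Set V) G).Connected}

/-- `N` is nested with respect to the graphical building set of `G`: for any
pairwise incomparable elements `G₁, …, G_t ∈ N` with `t ≥ 2`, their join (union)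
is not in the building set. -/
def GNested {V : Type*} (G : SimpleGraph V) (N : Set (Finset V)) : Prop :=
  ∀ s ⊆ N, s.Finite → 2 ≤ s.ncard →
    (∀ I ∈ s, ∀ J ∈ s, I ≠ J → ¬ I ⊆ J ∧ ¬ J ⊆ I) →
    ∀ t : Finset V, (↑t = ⋃ I ∈ s, (I : Set V)) → t ∉ graphBuilding G

/-- faces of the augmented Bergman fan of the Boolean matroid `B_n`:
compatible pairs `I ≤ 𝓕` of a subset `I ⊆ [n]` and a chain `𝓕` of proper
subsets of `[n]` with `I` contained in every member of `𝓕`. -/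
def AugFace (n : ℕ) :=
  {p : Finset (Fin n) × Set (Finset (Fin n)) //
    IsChain (· ⊆ ·) p.2 ∧ (∀ F ∈ p.2, F ≠ Finset.univ) ∧ ∀ F ∈ p.2, p.1 ⊆ F}

/-- faces of the reduced nested set complex of the Boolean lattice on `[n] ∪ {*}`
with respect to the graphical building set of the star graph `K_{1,n}`:
nested sets not containing the maximal element `[n] ∪ {*}`. -/
def RedNestedFace (n : ℕ) :=
  {N : Set (Finset (Option (Fin n))) //
    N ⊆ graphBuilding (starGraph n) ∧ GNested (starGraph n) N ∧ Finset.univ ∉ N}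

/-!
The building set of the star graph consists of the singletons `{i}`, `i ∈ [n]`, and the sets
containing `*`. Any two sets containing `*` have a connected union, while a union of at least two
singletons is disconnected; hence a family is nested exactly when each of its members containing
`*` is comparable with all its members. Writing those members as `F ∪ {*}`, the `F` form a chain
`𝓕` and the singletons below them form a set `I ⊆ min 𝓕`, so
`(I, 𝓕) ↦ {{i} : i ∈ I} ∪ {F ∪ {*} : F ∈ 𝓕}` is the bijection, and it visibly preserves and
reflects inclusion.
-/

section

variable {n : ℕ}

lemma starGraph_adj {a b : Option (Fin n)} :
    (starGraph n).Adj a b ↔ a ≠ b ∧ (a = none ∨ b = none) := by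
  simp [starGraph]

lemma connected_induce_starGraph_of_none_mem {t : Finset (Option (Fin n))} (ht : none ∈ t) :
    ((starGraph n).induce (t : Set (Option (Fin n)))).Connected := by
  rw [SimpleGraph.connected_iff_exists_forall_reachable]
  refine ⟨⟨none, ht⟩, fun ⟨a, _⟩ => ?_⟩
  cases a with
  | none => rfl
  | some i => exact SimpleGraph.Adj.reachable (starGraph_adj.2 ⟨nofun, Or.inl rfl⟩)

lemma induce_starGraph_eq_bot_of_none_notMem {t : Finset (Option (Fin n))} (ht : none ∉ t) :
    (starGraph n).induce (t : Set (Option (Fin n))) = ⊥ := by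
  ext ⟨a, ha⟩ ⟨b, hb⟩
  simp only [SimpleGraph.comap_adj, Function.Embedding.subtype_apply, starGraph_adj,
    SimpleGraph.bot_adj, iff_false, not_and]
  rintro - (rfl | rfl) <;> contradiction

lemma mem_graphBuilding_starGraph_iff {t : Finset (Option (Fin n))} :
    t ∈ graphBuilding (starGraph n) ↔ none ∈ t ∨ ∃ i, t = {some i} := by
  by_cases ht : none ∈ t
  · simpa [ht] using ⟨⟨none, ht⟩, connected_induce_starGraph_of_none_mem ht⟩
  · simp only [graphBuilding, Set.mem_ofPred_eq, induce_starGraph_eq_bot_of_none_notMem ht,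
      SimpleGraph.connected_bot_iff, ht, false_or]
    constructor
    · rintro ⟨⟨(_ | i), hi⟩, _, -⟩
      · contradiction
      · exact ⟨i, eq_singleton_iff_unique_mem.2 ⟨hi, fun b hb =>
          congrArg Subtype.val (Subsingleton.elim (⟨b, hb⟩ : (t : Set _)) ⟨_, hi⟩)⟩⟩
    · rintro ⟨i, rfl⟩
      simp

lemma gNested_starGraph_iff {N : Set (Finset (Option (Fin n)))} :
    GNested (starGraph n) N ↔ ∀ X ∈ N, ∀ Y ∈ N, none ∈ X → X ⊆ Y ∨ Y ⊆ X := by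
  constructor
  · intro hN X hX Y hY hX_none
    by_contra! hXY
    have hne : X ≠ Y := by rintro rfl; exact hXY.1 subset_rfl
    refine hN {X, Y} (Set.pair_subset hX hY) (Set.toFinite _) (Set.ncard_pair hne).ge ?_ (X ∪ Y)
      (by rw [Set.biUnion_pair, coe_union]) (mem_graphBuilding_starGraph_iff.2 (.inl (mem_union_left _ hX_none)))
    rintro A (rfl | rfl) B (rfl | rfl) hAB <;> first | exact absurd rfl hAB | exact hXY | exact hXY.symm
  · intro hN s hsN hs_fin hs_card hs_inc t ht htB
    have hsub : ∀ Z ∈ s, Z ⊆ t := fun Z hZ => by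
      rw [← coe_subset, ht]; exact Set.subset_biUnion_of_mem hZ
    rcases mem_graphBuilding_starGraph_iff.1 htB with ht_none | ⟨i, rfl⟩
    · -- the member of `s` containing `*` would be comparable with every other member
      rw [← mem_coe, ht, Set.mem_iUnion₂] at ht_none
      obtain ⟨Z, hZ, hZ_none⟩ := ht_none
      obtain ⟨W, hW, hWZ⟩ := Set.exists_ne_of_one_lt_ncard hs_card Z
      have := hs_inc Z hZ W hW hWZ.symm
      rcases hN Z (hsN hZ) W (hsN hW) hZ_none with h | h <;> tauto
    · obtain ⟨X, hX, Y, hY, hXY⟩ := (Set.one_lt_ncard hs_fin).1 hs_card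
      have := hs_inc X hX Y hY hXY
      rcases subset_singleton_iff.1 (hsub X hX) with rfl | rfl
      · exact this.1 (empty_subset _)
      rcases subset_singleton_iff.1 (hsub Y hY) with rfl | rfl
      · exact this.2 (empty_subset _)
      · exact hXY rfl

/-- The nested set `{{i} : i ∈ I} ∪ {F ∪ {*} : F ∈ 𝓕}` of a compatible pair `I ≤ 𝓕`. -/
def nestedSetOf (I : Finset (Fin n)) (𝓕 : Set (Finset (Fin n))) :
    Set (Finset (Option (Fin n))) :=
  (fun i => {some i}) '' I ∪ insertNone '' 𝓕

lemma singleton_some_ne_insertNone (i : Fin n) (F : Finset (Fin n)) :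
    ({some i} : Finset (Option (Fin n))) ≠ insertNone F := fun h => by
  simpa [← h] using none_mem_insertNone (s := F)

lemma singleton_some_mem_nestedSetOf {I : Finset (Fin n)} {𝓕 : Set (Finset (Fin n))}
    {i : Fin n} : {some i} ∈ nestedSetOf I 𝓕 ↔ i ∈ I := by
  simp [nestedSetOf, (singleton_some_ne_insertNone _ _).symm]

lemma insertNone_mem_nestedSetOf {I : Finset (Fin n)} {𝓕 : Set (Finset (Fin n))}
    {F : Finset (Fin n)} : insertNone F ∈ nestedSetOf I 𝓕 ↔ F ∈ 𝓕 := by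
  simp [nestedSetOf, singleton_some_ne_insertNone]

lemma nestedSetOf_subset_nestedSetOf_iff {I I' : Finset (Fin n)}
    {𝓕 𝓕' : Set (Finset (Fin n))} :
    nestedSetOf I 𝓕 ⊆ nestedSetOf I' 𝓕' ↔ I ⊆ I' ∧ 𝓕 ⊆ 𝓕' := by
  refine ⟨fun h => ⟨fun i hi => ?_, fun F hF => ?_⟩, fun h =>
    Set.union_subset_union (Set.image_mono (coe_subset.2 h.1)) (Set.image_mono h.2)⟩
  · exact singleton_some_mem_nestedSetOf.1 (h (singleton_some_mem_nestedSetOf.2 hi))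
  · exact insertNone_mem_nestedSetOf.1 (h (insertNone_mem_nestedSetOf.2 hF))

lemma nestedSetOf_subset_graphBuilding (I : Finset (Fin n)) (𝓕 : Set (Finset (Fin n))) :
    nestedSetOf I 𝓕 ⊆ graphBuilding (starGraph n) := by
  rintro X (⟨i, -, rfl⟩ | ⟨F, -, rfl⟩) <;> rw [mem_graphBuilding_starGraph_iff]
  · exact .inr ⟨i, rfl⟩
  · exact .inl none_mem_insertNone

lemma gNested_nestedSetOf {I : Finset (Fin n)} {𝓕 : Set (Finset (Fin n))}
    (h𝓕 : IsChain (· ⊆ ·) 𝓕) (hI : ∀ F ∈ 𝓕, I ⊆ F) :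
    GNested (starGraph n) (nestedSetOf I 𝓕) := by
  rw [gNested_starGraph_iff]
  rintro _ (⟨i, -, rfl⟩ | ⟨F, hF, rfl⟩) _ (⟨j, hj, rfl⟩ | ⟨G, hG, rfl⟩) hnone
  · simp at hnone
  · simp at hnone
  · exact .inr (singleton_subset_iff.2 (some_mem_insertNone.2 (hI F hF hj)))
  · simpa only [OrderEmbedding.le_iff_le] using h𝓕.total hF hG

lemma univ_notMem_nestedSetOf (I : Finset (Fin n)) {𝓕 : Set (Finset (Fin n))}
    (h𝓕 : ∀ F ∈ 𝓕, F ≠ univ) : univ ∉ nestedSetOf I 𝓕 := by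
  rw [univ_option]
  rintro (⟨i, -, h⟩ | ⟨F, hF, h⟩)
  · exact singleton_some_ne_insertNone i univ h
  · exact h𝓕 F hF (insertNone.injective h)

def AugFace.toRedNestedFace (p : AugFace n) : RedNestedFace n :=
  ⟨nestedSetOf p.1.1 p.1.2, nestedSetOf_subset_graphBuilding _ _,
    gNested_nestedSetOf p.2.1 p.2.2.2, univ_notMem_nestedSetOf _ p.2.2.1⟩

lemma AugFace.toRedNestedFace_injective :
    Function.Injective (AugFace.toRedNestedFace (n := n)) := by
  intro u v huv
  have huv' : nestedSetOf u.1.1 u.1.2 = nestedSetOf v.1.1 v.1.2 := congrArg Subtype.val huv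
  obtain ⟨hI, h𝓕⟩ := nestedSetOf_subset_nestedSetOf_iff.1 huv'.le
  obtain ⟨hI', h𝓕'⟩ := nestedSetOf_subset_nestedSetOf_iff.1 huv'.ge
  exact Subtype.ext (Prod.ext (hI.antisymm hI') (h𝓕.antisymm h𝓕'))

lemma isChain_preimage_insertNone {N : Set (Finset (Option (Fin n)))}
    (hN : GNested (starGraph n) N) : IsChain (· ⊆ ·) (insertNone ⁻¹' N) := by
  intro F hF G hG _
  simpa only [OrderEmbedding.le_iff_le] using
    gNested_starGraph_iff.1 hN _ hF _ hG none_mem_insertNone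

lemma mem_of_singleton_some_mem_of_insertNone_mem {N : Set (Finset (Option (Fin n)))}
    (hN : GNested (starGraph n) N) {i : Fin n} {F : Finset (Fin n)}
    (hi : {some i} ∈ N) (hF : insertNone F ∈ N) : i ∈ F := by
  rcases gNested_starGraph_iff.1 hN _ hF _ hi none_mem_insertNone with h | h
  · simpa using h none_mem_insertNone
  · exact some_mem_insertNone.1 (singleton_subset_iff.1 h)

lemma nestedSetOf_preimage_insertNone {N : Set (Finset (Option (Fin n)))}
    (hN : N ⊆ graphBuilding (starGraph n)) {I : Finset (Fin n)}
    (hI : ∀ i, i ∈ I ↔ {some i} ∈ N) : nestedSetOf I (insertNone ⁻¹' N) = N := by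
  ext X
  constructor
  · rintro (⟨i, hi, rfl⟩ | ⟨F, hF, rfl⟩)
    · exact (hI i).1 hi
    · exact hF
  · intro hX
    rcases mem_graphBuilding_starGraph_iff.1 (hN hX) with hnone | ⟨i, rfl⟩
    · have hX_eq : insertNone (eraseNone X) = X := by
        rw [insertNone_eraseNone, insert_eq_of_mem hnone]
      exact .inr ⟨eraseNone X, by rwa [Set.mem_preimage, hX_eq], hX_eq⟩
    · exact .inl ⟨i, (hI i).2 hX, rfl⟩

lemma AugFace.toRedNestedFace_surjective :
    Function.Surjective (AugFace.toRedNestedFace (n := n)) := by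
  classical
  rintro ⟨N, hN_building, hN_nested, hN_univ⟩
  let I := univ.filter fun i : Fin n => {some i} ∈ N
  have hI : ∀ i, i ∈ I ↔ {some i} ∈ N := by simp [I]
  refine ⟨⟨(I, insertNone ⁻¹' N), isChain_preimage_insertNone hN_nested, ?_, ?_⟩,
    Subtype.ext (nestedSetOf_preimage_insertNone hN_building hI)⟩
  · rintro F hF rfl
    exact hN_univ (univ_option (Fin n) ▸ hF)
  · intro F hF i hi
    exact mem_of_singleton_some_mem_of_insertNone_mem hN_nested ((hI i).1 hi) hF

end

theorem stmt15 (n : ℕ) :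
    ∃ e : AugFace n ≃ RedNestedFace n,
      ∀ u v : AugFace n,
        (u.1.1 ⊆ v.1.1 ∧ u.1.2 ⊆ v.1.2) ↔ (e u).1 ⊆ (e v).1 :=
  ⟨.ofBijective _ ⟨AugFace.toRedNestedFace_injective, AugFace.toRedNestedFace_surjective⟩,
    fun _ _ => nestedSetOf_subset_nestedSetOf_iff.symm⟩
end

section
/- The number of chains ∅ = F_0 ⊊ F_1 ⊊ ... ⊊ F_k ⊆ [n] with all gaps |F_i| − |F_{i−1}| ≥ 2 (for 1 ≤ i ≤ k), weighted by Π_{i=1}^k (|F_i| − |F_{i−1}| − 1), equals n!. -/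
open Finset

open Classical

variable {n m : ℕ}

def chainCond (U : Finset (Fin n)) (F : Fin m → Finset (Fin n)) : Prop :=
  StrictMono F ∧ ∀ i : Fin m, (prevSet F i).card + 2 ≤ (F i).card ∧ F i ⊆ U

def chainWt (F : Fin m → Finset (Fin n)) : ℕ :=
  ∏ i, ((F i).card - (prevSet F i).card - 1)

noncomputable def chainSum (n : ℕ) (U : Finset (Fin n)) (m : ℕ) : ℕ :=
  ∑ F : Fin m → Finset (Fin n), if chainCond U F then chainWt F else 0

noncomputable def Wchain (n : ℕ) (U : Finset (Fin n)) : ℕ :=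
  ∑ m ∈ Finset.range (n + 1), chainSum n U m

lemma prevSet_of_val_zero (F : Fin m → Finset (Fin n)) (i : Fin m) (h : (i : ℕ) = 0) :
    prevSet F i = ∅ := by
  simp [prevSet, h]

lemma prevSet_succ_s17 (F : Fin (m + 1) → Finset (Fin n)) (j : Fin m) :
    prevSet F j.succ = F j.castSucc := by
  rw [prevSet, dif_pos (by simp)]
  congr 1

lemma prevSet_shift (F : Fin (m + 1) → Finset (Fin n)) (i : Fin m) :
    prevSet (fun j : Fin m => F j.succ \ F 0) i = prevSet F i.succ \ F 0 := by
  rw [prevSet_succ_s17 F i]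
  rcases Nat.eq_zero_or_pos (i : ℕ) with h | h
  · rw [prevSet_of_val_zero _ i h]
    have h0 : i.castSucc = 0 := by simp [Fin.ext_iff, h]
    rw [h0, Finset.sdiff_self]
  · rw [prevSet, dif_pos h]
    show F (⟨(i:ℕ) - 1, _⟩ : Fin m).succ \ F 0 = _
    congr 2
    simp [Fin.ext_iff]
    omega

lemma prevSet_cons (T : Finset (Fin n)) (g : Fin m → Finset (Fin n)) (i : Fin m) :
    prevSet (Fin.cons T (fun j => g j ∪ T) : Fin (m+1) → Finset (Fin n)) i.succ
      = prevSet g i ∪ T := by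
  rw [prevSet_succ_s17]
  rcases Nat.eq_zero_or_pos (i : ℕ) with h | h
  · rw [prevSet_of_val_zero _ i h]
    have h0 : i.castSucc = 0 := by simp [Fin.ext_iff, h]
    rw [h0, Fin.cons_zero]
    simp
  · rw [prevSet, dif_pos h]
    have h1 : i.castSucc = (⟨(i:ℕ) - 1, Nat.lt_of_le_of_lt (Nat.sub_le _ _) i.isLt⟩ : Fin m).succ := by
      simp [Fin.ext_iff]
      omega
    rw [h1, Fin.cons_succ]

lemma ssubset_of_card {α : Type*} {A B : Finset α} (h : A ⊆ B) (hc : A.card < B.card) :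
    A ⊂ B :=
  Finset.ssubset_def.mpr ⟨h, fun h' => absurd (Finset.card_le_card h') (by omega)⟩

lemma sdiff_ssubset_sdiff {A B C : Finset (Fin n)} (hAB : A ⊂ B) (hCA : C ⊆ A) :
    A \ C ⊂ B \ C := by
  have hCB : C ⊆ B := hCA.trans hAB.subset
  have h1 := Finset.card_lt_card hAB
  have h2 := Finset.card_le_card hCA
  refine ssubset_of_card (Finset.sdiff_subset_sdiff hAB.subset le_rfl) ?_
  rw [Finset.card_sdiff_of_subset hCA, Finset.card_sdiff_of_subset hCB]
  omega

lemma prevSet_subset' {V : Finset (Fin n)} {g : Fin m → Finset (Fin n)}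
    (h : ∀ i, g i ⊆ V) (j : Fin m) : prevSet g j ⊆ V := by
  rw [prevSet]
  split
  · exact h _
  · exact Finset.empty_subset _

lemma chain_card_ge {U : Finset (Fin n)} {F : Fin m → Finset (Fin n)}
    (h : chainCond U F) : ∀ r, ∀ hr : r < m, 2 * (r + 1) ≤ (F ⟨r, hr⟩).card := by
  intro r
  induction r with
  | zero =>
    intro hr
    have h1 := (h.2 ⟨0, hr⟩).1
    rwa [prevSet_of_val_zero _ _ rfl, Finset.card_empty] at h1
  | succ r ih =>
    intro hr
    have h1 := (h.2 ⟨r+1, hr⟩).1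
    have h2 : prevSet F ⟨r+1, hr⟩ = F ⟨r, by omega⟩ := by
      rw [prevSet, dif_pos (by simp)]
      congr 1
    rw [h2] at h1
    have h3 := ih (by omega)
    omega

lemma chainSum_eq_zero {V : Finset (Fin n)} {m : ℕ} (h : V.card < 2 * m) :
    chainSum n V m = 0 := by
  unfold chainSum
  apply Finset.sum_eq_zero
  intro F _
  rw [if_neg]
  intro hc
  have hm : 0 < m := by by_contra h'; omega
  have h1 := chain_card_ge hc (m - 1) (by omega)
  have h2 : F ⟨m-1, by omega⟩ ⊆ V := (hc.2 _).2
  have h3 := Finset.card_le_card h2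
  omega

lemma chainSum_zero (U : Finset (Fin n)) : chainSum n U 0 = 1 := by
  unfold chainSum
  have h : ∀ F : Fin 0 → Finset (Fin n), (if chainCond U F then chainWt F else 0) = 1 := by
    intro F
    rw [if_pos ⟨fun a => a.elim0, fun i => i.elim0⟩]
    simp [chainWt]
  rw [Finset.sum_congr rfl fun F _ => h F, Finset.sum_const, smul_eq_mul, mul_one,
    Finset.card_univ]
  simp

lemma chainSum_succ (n : ℕ) (U : Finset (Fin n)) (m : ℕ) :
    chainSum n U (m + 1) = ∑ T ∈ U.powerset, (T.card - 1) * chainSum n (U \ T) m := by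
  have hsplit : ∑ T ∈ U.powerset, (T.card - 1) * chainSum n (U \ T) m
      = ∑ T ∈ U.powerset.filter (fun T => 2 ≤ T.card),
          (T.card - 1) * chainSum n (U \ T) m := by
    rw [← Finset.sum_filter_add_sum_filter_not U.powerset (fun T => 2 ≤ T.card)]
    have hz : ∑ T ∈ U.powerset.filter (fun T => ¬ 2 ≤ T.card),
        (T.card - 1) * chainSum n (U \ T) m = 0 := by
      apply Finset.sum_eq_zero
      intro T hT
      have h1 := (Finset.mem_filter.mp hT).2
      have h2 : T.card - 1 = 0 := by omega
      rw [h2, zero_mul]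
    rw [hz, add_zero]
  rw [hsplit]
  unfold chainSum
  conv_lhs => rw [← Finset.sum_filter]
  have hR : ∀ T : Finset (Fin n), (T.card - 1) *
      (∑ F : Fin m → Finset (Fin n), if chainCond (U \ T) F then chainWt F else 0)
      = ∑ F ∈ Finset.univ.filter (fun F : Fin m → Finset (Fin n) => chainCond (U \ T) F), (T.card - 1) * chainWt F := by
    intro T
    rw [← Finset.sum_filter, Finset.mul_sum]
  simp_rw [hR]
  rw [Finset.sum_sigma']
  refine Finset.sum_nbij' (fun F => ⟨F 0, fun i => F i.succ \ F 0⟩)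
    (fun p => Fin.cons p.1 (fun i => p.2 i ∪ p.1)) ?_ ?_ ?_ ?_ ?_
  · -- forward membership
    intro F hF
    have hc : chainCond U F := (Finset.mem_filter.mp hF).2
    have hmono0 : ∀ i : Fin (m+1), F 0 ⊆ F i := fun i => hc.1.monotone (Fin.zero_le i)
    have hT2 : 2 ≤ (F 0).card := by
      have h1 := (hc.2 0).1
      rwa [prevSet_of_val_zero _ _ (by simp), Finset.card_empty] at h1
    rw [Finset.mem_sigma]
    constructor
    · rw [Finset.mem_filter, Finset.mem_powerset]
      exact ⟨(hc.2 0).2, hT2⟩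
    · rw [Finset.mem_filter]
      refine ⟨Finset.mem_univ _, ?_, ?_⟩
      · intro a b hab
        exact sdiff_ssubset_sdiff (hc.1 (Fin.succ_lt_succ_iff.mpr hab)) (hmono0 _)
      · intro i
        constructor
        · rw [prevSet_shift, prevSet_succ_s17,
            Finset.card_sdiff_of_subset (hmono0 _), Finset.card_sdiff_of_subset (hmono0 _)]
          have hgap := (hc.2 i.succ).1
          rw [prevSet_succ_s17] at hgap
          have h0le : (F 0).card ≤ (F i.castSucc).card := Finset.card_le_card (hmono0 _)
          omega
        · exact Finset.sdiff_subset_sdiff (hc.2 i.succ).2 le_rfl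
  · -- backward membership
    rintro ⟨T, g⟩ hp
    rw [Finset.mem_sigma] at hp
    obtain ⟨hT, hg⟩ := hp
    rw [Finset.mem_filter, Finset.mem_powerset] at hT
    obtain ⟨hTU, hT2⟩ := hT
    have hg' : chainCond (U \ T) g := (Finset.mem_filter.mp hg).2
    have hdisj : ∀ i, Disjoint (g i) T :=
      fun i => Finset.disjoint_of_subset_left (hg'.2 i).2 Finset.sdiff_disjoint
    have hcardu : ∀ i, (g i ∪ T).card = (g i).card + T.card :=
      fun i => Finset.card_union_of_disjoint (hdisj i)
    have hgpos : ∀ i, 2 ≤ (g i).card := fun i => le_trans (by omega) ((hg'.2 i).1)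
    rw [Finset.mem_filter]
    refine ⟨Finset.mem_univ _, ?_, ?_⟩
    · -- StrictMono
      dsimp only
      intro a b hab
      rcases Fin.eq_zero_or_eq_succ b with rfl | ⟨j, rfl⟩
      · exact absurd hab (Fin.not_lt_zero a)
      rw [show (Fin.cons T (fun i => g i ∪ T) : Fin (m+1) → Finset (Fin n)) j.succ
            = g j ∪ T from Fin.cons_succ _ _ _]
      rcases Fin.eq_zero_or_eq_succ a with rfl | ⟨i, rfl⟩
      · rw [show (Fin.cons T (fun i => g i ∪ T) : Fin (m+1) → Finset (Fin n)) 0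
              = T from Fin.cons_zero _ _]
        refine ssubset_of_card Finset.subset_union_right ?_
        rw [hcardu]
        have := hgpos j
        omega
      · rw [show (Fin.cons T (fun i => g i ∪ T) : Fin (m+1) → Finset (Fin n)) i.succ
              = g i ∪ T from Fin.cons_succ _ _ _]
        have hij : i < j := by rwa [Fin.succ_lt_succ_iff] at hab
        have hss := hg'.1 hij
        refine ssubset_of_card (Finset.union_subset_union_left hss.subset) ?_
        rw [hcardu, hcardu]
        have := Finset.card_lt_card hss
        omega
    · -- conditions
      dsimp only
      intro i
      rcases Fin.eq_zero_or_eq_succ i with rfl | ⟨j, rfl⟩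
      · rw [prevSet_of_val_zero _ _ (by simp),
          show (Fin.cons T (fun i => g i ∪ T) : Fin (m+1) → Finset (Fin n)) 0
            = T from Fin.cons_zero _ _]
        exact ⟨by simpa using hT2, hTU⟩
      · rw [prevSet_cons,
          show (Fin.cons T (fun i => g i ∪ T) : Fin (m+1) → Finset (Fin n)) j.succ
            = g j ∪ T from Fin.cons_succ _ _ _]
        have hprevsub : prevSet g j ⊆ U \ T := prevSet_subset' (fun i => (hg'.2 i).2) j
        have hpdisj : Disjoint (prevSet g j) T :=
          Finset.disjoint_of_subset_left hprevsub Finset.sdiff_disjoint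
        constructor
        · rw [Finset.card_union_of_disjoint hpdisj, hcardu]
          have := (hg'.2 j).1
          omega
        · exact Finset.union_subset (((hg'.2 j).2).trans Finset.sdiff_subset) hTU
  · -- left inverse
    intro F hF
    have hc : chainCond U F := (Finset.mem_filter.mp hF).2
    have hmono0 : ∀ i : Fin (m+1), F 0 ⊆ F i := fun i => hc.1.monotone (Fin.zero_le i)
    funext x
    dsimp only
    rcases Fin.eq_zero_or_eq_succ x with rfl | ⟨j, rfl⟩
    · exact Fin.cons_zero _ _
    · rw [Fin.cons_succ]
      exact Finset.sdiff_union_of_subset (hmono0 _)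
  · -- right inverse
    rintro ⟨T, g⟩ hp
    rw [Finset.mem_sigma] at hp
    obtain ⟨hT, hg⟩ := hp
    have hg' : chainCond (U \ T) g := (Finset.mem_filter.mp hg).2
    have hdisj : ∀ i, Disjoint (g i) T :=
      fun i => Finset.disjoint_of_subset_left (hg'.2 i).2 Finset.sdiff_disjoint
    simp only [Fin.cons_zero, Fin.cons_succ]
    congr 1
    funext i
    rw [Finset.union_sdiff_right, Finset.sdiff_eq_self_of_disjoint (hdisj i)]
  · -- weights
    intro F hF
    have hc : chainCond U F := (Finset.mem_filter.mp hF).2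
    have hmono0 : ∀ i : Fin (m+1), F 0 ⊆ F i := fun i => hc.1.monotone (Fin.zero_le i)
    show chainWt F = ((F 0).card - 1) * chainWt (fun i => F i.succ \ F 0)
    unfold chainWt
    rw [Fin.prod_univ_succ, prevSet_of_val_zero F 0 (by simp), Finset.card_empty,
      Nat.sub_zero]
    congr 1
    apply Finset.prod_congr rfl
    intro i _
    dsimp only
    rw [prevSet_shift, prevSet_succ_s17,
      Finset.card_sdiff_of_subset (hmono0 _), Finset.card_sdiff_of_subset (hmono0 _)]
    have h0le : (F 0).card ≤ (F i.castSucc).card := Finset.card_le_card (hmono0 _)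
    omega

lemma Wchain_rec (n : ℕ) (U : Finset (Fin n)) :
    Wchain n U = 1 + ∑ T ∈ U.powerset, (T.card - 1) * Wchain n (U \ T) := by
  unfold Wchain
  rw [Finset.sum_range_succ', chainSum_zero]
  simp_rw [chainSum_succ]
  rw [Finset.sum_comm, add_comm]
  congr 1
  apply Finset.sum_congr rfl
  intro T hT
  rw [← Finset.mul_sum]
  rcases Nat.lt_or_ge T.card 2 with h2 | h2
  · have h0 : T.card - 1 = 0 := by omega
    rw [h0, zero_mul, zero_mul]
  · congr 1
    rw [Finset.sum_range_succ]
    have hTU : T ⊆ U := Finset.mem_powerset.mp hT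
    have hz : chainSum n (U \ T) n = 0 := by
      apply chainSum_eq_zero
      have h1 : (U \ T).card = U.card - T.card := Finset.card_sdiff_of_subset hTU
      have h2' : T.card ≤ n := le_trans (Finset.card_le_card hTU)
        (by simpa using Finset.card_le_univ U)
      have h3 : U.card ≤ n := by simpa using Finset.card_le_univ U
      omega
    rw [hz, add_zero]

lemma tele (c : ℕ) : ∀ r, r ≤ c →
    ∑ j ∈ Finset.range (r+1), c.choose j * ((j-1) * (c-j).factorial)
      = c.factorial - c.factorial / r.factorial := by
  intro r
  induction r with
  | zero => intro _; simp
  | succ r ih =>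
    intro hr
    rw [Finset.sum_range_succ, ih (by omega)]
    have hfd : (r+1).factorial ∣ c.factorial := Nat.factorial_dvd_factorial hr
    have hfd' : r.factorial ∣ c.factorial := Nat.factorial_dvd_factorial (by omega)
    set x := c.factorial / (r+1).factorial with hx
    set y := c.factorial / r.factorial with hy
    have hxx : x * (r+1).factorial = c.factorial := Nat.div_mul_cancel hfd
    have hyy : y * r.factorial = c.factorial := Nat.div_mul_cancel hfd'
    have hchoose : c.choose (r+1) * (c-(r+1)).factorial = x := by
      have h1 : c.choose (r+1) * (r+1).factorial * (c-(r+1)).factorial = c.factorial :=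
        Nat.choose_mul_factorial_mul_factorial hr
    -- rearrange
      have h2 : c.choose (r+1) * (c-(r+1)).factorial * (r+1).factorial
          = x * (r+1).factorial := by
        rw [hxx, ← h1]; ring
      exact Nat.eq_of_mul_eq_mul_right (Nat.factorial_pos _) h2
    have hterm : c.choose (r+1) * (((r+1)-1) * (c-(r+1)).factorial) = r * x := by
      have h3 : (r+1) - 1 = r := rfl
      rw [h3, mul_left_comm, hchoose]
    have h4 : (r+1) * x = y := by
      refine Nat.eq_of_mul_eq_mul_right (Nat.factorial_pos r) ?_
      rw [hyy]
      rw [← hxx, Nat.factorial_succ]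
      ring
    have hyx : y = r * x + x := by rw [← h4]; ring
    have hyc : y ≤ c.factorial := Nat.div_le_self _ _
    rw [hterm]
    set z := r * x with hz
    omega

lemma factorial_identity (c : ℕ) :
    1 + ∑ j ∈ Finset.range (c+1), c.choose j * ((j-1) * (c-j).factorial)
      = c.factorial := by
  rw [tele c c le_rfl, Nat.div_self (Nat.factorial_pos c)]
  have := Nat.factorial_pos c
  omega

lemma Wchain_eq (n : ℕ) : ∀ c : ℕ, ∀ U : Finset (Fin n), U.card = c →
    Wchain n U = c.factorial := by
  intro c
  induction c using Nat.strong_induction_on with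
  | _ c ih =>
    intro U hU
    rw [Wchain_rec]
    have hstep : ∑ T ∈ U.powerset, (T.card - 1) * Wchain n (U \ T)
        = ∑ T ∈ U.powerset, (T.card - 1) * (c - T.card).factorial := by
      apply Finset.sum_congr rfl
      intro T hT
      have hTU := Finset.mem_powerset.mp hT
      rcases Nat.eq_zero_or_pos T.card with h0 | h0
      · rw [h0]; simp
      · have hc : (U \ T).card = c - T.card := by rw [Finset.card_sdiff_of_subset hTU, hU]
        have hlt : c - T.card < c := by
          have : T.card ≤ c := hU ▸ Finset.card_le_card hTU
          omega
        rw [ih _ hlt _ hc]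
    rw [hstep, Finset.sum_powerset, hU]
    have hgroup : ∀ j ∈ Finset.range (c+1),
        ∑ T ∈ Finset.powersetCard j U, (T.card - 1) * (c - T.card).factorial
          = c.choose j * ((j-1) * (c-j).factorial) := by
      intro j hj
      have h1 : ∀ T ∈ Finset.powersetCard j U,
          (T.card - 1) * (c - T.card).factorial = (j-1)*(c-j).factorial := by
        intro T hT
        rw [(Finset.mem_powersetCard.mp hT).2]
      rw [Finset.sum_congr rfl h1, Finset.sum_const, Finset.card_powersetCard, hU,
        smul_eq_mul]
    rw [Finset.sum_congr rfl hgroup]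
    exact factorial_identity c


open Classical in
theorem stmt17 (n : ℕ) :
    ∑ p : Σ k : Fin (n + 1), (Fin (k : ℕ) → Finset (Fin n)),
      (if StrictMono p.2 ∧ ∀ i : Fin (p.1 : ℕ), (prevSet p.2 i).card + 2 ≤ (p.2 i).card
       then ∏ i : Fin (p.1 : ℕ), ((p.2 i).card - (prevSet p.2 i).card - 1)
       else 0) = Nat.factorial n := by
  have h1 : (∑ p : Σ k : Fin (n + 1), (Fin (k : ℕ) → Finset (Fin n)),
      (if StrictMono p.2 ∧ ∀ i : Fin (p.1 : ℕ), (prevSet p.2 i).card + 2 ≤ (p.2 i).card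
       then ∏ i : Fin (p.1 : ℕ), ((p.2 i).card - (prevSet p.2 i).card - 1)
       else 0)) = Wchain n Finset.univ := by
    rw [← Finset.univ_sigma_univ, Finset.sum_sigma]
    have h2 : ∀ k : Fin (n+1),
        (∑ F : Fin (k : ℕ) → Finset (Fin n),
          if StrictMono F ∧ ∀ i : Fin (k : ℕ), (prevSet F i).card + 2 ≤ (F i).card
          then ∏ i : Fin (k : ℕ), ((F i).card - (prevSet F i).card - 1)
          else 0) = chainSum n Finset.univ (k : ℕ) := by
      intro k
      unfold chainSum
      apply Finset.sum_congr rfl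
      intro F _
      refine if_congr ?_ rfl rfl
      constructor
      · rintro ⟨hm, hg⟩
        exact ⟨hm, fun i => ⟨hg i, Finset.subset_univ _⟩⟩
      · rintro ⟨hm, hg⟩
        exact ⟨hm, fun i => (hg i).1⟩
    rw [Finset.sum_congr rfl fun k _ => h2 k]
    rw [Fin.sum_univ_eq_sum_range (fun m => chainSum n Finset.univ m) (n+1)]
    rfl
  rw [h1]
  exact Wchain_eq n n Finset.univ (by simp)
end
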